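/- arXiv:2105.12150 — 4 statements merged into one kernel-verified Lean document; each statement's English description precedes it below -/
import Mathlib

section
/- In a median graph G with a fixed basepoint v₀, let u, v be vertices with u ∈ I(v₀,v), let L be a nonempty POF outgoing from v, and let w be the anti-basis of the induced hypercube with basis v and Θ-classes L. Then the following are equivalent: (i) the penultimate milestone of (u,w) is v, i.e. π̄(u,w) = v; (ii) Π(u,w) = Π(u,v) ∪ {w}; (iii) for every Θ-class E_i ∈ L, the set L̄_{u,v} ∪ {E_i} is not a POF. -/
namespace MedianPaper

variable {V : Type*}

/-- The metric interval `I(u,v)`: vertices on shortest `(u,v)`-paths. -/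
def interval (G : SimpleGraph V) (u v : V) : Set V :=
  {w | G.dist u w + G.dist w v = G.dist u v}

/-- A median graph: a connected graph in which every triple of vertices
has a unique median. -/
def MedianGraph (G : SimpleGraph V) : Prop :=
  G.Connected ∧ ∀ x y z : V, ∃! m : V,
    m ∈ interval G x y ∧ m ∈ interval G y z ∧ m ∈ interval G z x

/-- `u v x y` span a 4-cycle `u-v-y-x-u`, with opposite edge pairs
`(uv, xy)` and `(ux, vy)`. -/
def IsSquare (G : SimpleGraph V) (u v x y : V) : Prop :=
  G.Adj u v ∧ G.Adj x y ∧ G.Adj u x ∧ G.Adj v y ∧ u ≠ y ∧ v ≠ x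

/-- Two edges are in relation Θ₀ if they are opposite edges of a common 4-cycle. -/
def Theta0 (G : SimpleGraph V) (e f : Sym2 V) : Prop :=
  ∃ u v x y : V, IsSquare G u v x y ∧ e = s(u, v) ∧ f = s(x, y)

/-- Θ : the reflexive-transitive closure of Θ₀ on the edges of `G`. -/
def Theta (G : SimpleGraph V) (e f : Sym2 V) : Prop :=
  e ∈ G.edgeSet ∧ f ∈ G.edgeSet ∧ Relation.ReflTransGen (Theta0 G) e f

/-- The Θ-classes of `G`: equivalence classes of edges under Θ. -/
def ThetaClass (G : SimpleGraph V) (C : Set (Sym2 V)) : Prop :=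
  ∃ e ∈ G.edgeSet, C = {f | Theta G e f}

/-- The edge set `C` separates `u` from `v` : they lie in different
components of `G` minus `C`. -/
def Separates (G : SimpleGraph V) (C : Set (Sym2 V)) (u v : V) : Prop :=
  ¬ (G.deleteEdges C).Reachable u v

/-- The signature `σ_{u,v}`: Θ-classes separating `u` from `v`. -/
def signature (G : SimpleGraph V) (u v : V) : Set (Set (Sym2 V)) :=
  {C | ThetaClass G C ∧ Separates G C u v}

/-- `H`, `H'` are the two connected components (halfspaces) of `G` deprived
of the edges in `C`. -/
def IsHalfspacePair (G : SimpleGraph V) (C : Set (Sym2 V)) (H H' : Set V) : Prop :=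
  H.Nonempty ∧ H'.Nonempty ∧ Disjoint H H' ∧ H ∪ H' = Set.univ ∧
  (∀ x ∈ H, ∀ y ∈ H, (G.deleteEdges C).Reachable x y) ∧
  (∀ x ∈ H', ∀ y ∈ H', (G.deleteEdges C).Reachable x y) ∧
  (∀ x ∈ H, ∀ y ∈ H', ¬ (G.deleteEdges C).Reachable x y)

/-- The boundary of a halfspace `H` of the Θ-class `C` : vertices of `H`
incident to an edge of `C`. -/
def boundarySet (G : SimpleGraph V) (C : Set (Sym2 V)) (H : Set V) : Set V :=
  {x | x ∈ H ∧ ∃ y, G.Adj x y ∧ s(x, y) ∈ C}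

/-- Orthogonality of Θ-classes: there is a common square using both. -/
def Orthogonal (G : SimpleGraph V) (C₁ C₂ : Set (Sym2 V)) : Prop :=
  ∃ u v x y : V, IsSquare G u v x y ∧
    s(u, v) ∈ C₁ ∧ s(x, y) ∈ C₁ ∧ s(u, x) ∈ C₂ ∧ s(v, y) ∈ C₂

/-- A pairwise orthogonal family (POF) of Θ-classes. -/
def IsPOF (G : SimpleGraph V) (X : Set (Set (Sym2 V))) : Prop :=
  (∀ C ∈ X, ThetaClass G C) ∧
  ∀ C ∈ X, ∀ C' ∈ X, C ≠ C' → Orthogonal G C C'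

/-- The `k`-dimensional hypercube graph, on subsets of `{1,…,k}`;
two subsets are adjacent iff their symmetric difference has one element. -/
def cubeGraph (k : ℕ) : SimpleGraph (Finset (Fin k)) where
  Adj A B := (symmDiff A B).card = 1
  symm := by
    constructor
    intro A B h
    rwa [symmDiff_comm] at h
  loopless := by
    constructor
    intro A h
    simp [symmDiff_self] at h

/-- `S` induces a hypercube of dimension `k` in `G`. -/
def IsCubeDim (G : SimpleGraph V) (S : Set V) (k : ℕ) : Prop :=
  Nonempty ((G.induce S) ≃g cubeGraph k)

/-- `S` induces a hypercube in `G`. -/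
def IsInducedCube (G : SimpleGraph V) (S : Set V) : Prop :=
  ∃ k, IsCubeDim G S k

/-- The dimension of `G` is `d`: the largest dimension of an induced hypercube. -/
def GraphDim (G : SimpleGraph V) (d : ℕ) : Prop :=
  (∃ S : Set V, IsCubeDim G S d) ∧ ∀ (S : Set V) (k : ℕ), IsCubeDim G S k → k ≤ d

/-- The Θ-classes of the edges of the induced subgraph on `S`. -/
def cubeClasses (G : SimpleGraph V) (S : Set V) : Set (Set (Sym2 V)) :=
  {C | ThetaClass G C ∧ ∃ x ∈ S, ∃ y ∈ S, G.Adj x y ∧ s(x, y) ∈ C}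

/-- With the `v₀`-orientation, `b ∈ S` is the basis of `S`: all edges of `S`
incident to `b` are outgoing from `b`. -/
def IsBasis (G : SimpleGraph V) (v₀ : V) (S : Set V) (b : V) : Prop :=
  b ∈ S ∧ ∀ w ∈ S, G.Adj b w → G.dist v₀ b < G.dist v₀ w

/-- With the `v₀`-orientation, `b ∈ S` is the anti-basis of `S`: all edges of `S`
incident to `b` are ingoing to `b`. -/
def IsAntiBasis (G : SimpleGraph V) (v₀ : V) (S : Set V) (b : V) : Prop :=
  b ∈ S ∧ ∀ w ∈ S, G.Adj b w → G.dist v₀ w < G.dist v₀ b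

/-- `ℰ⁻(v)` : the Θ-classes containing at least one edge ingoing to `v`. -/
def inClasses (G : SimpleGraph V) (v₀ v : V) : Set (Set (Sym2 V)) :=
  {C | ThetaClass G C ∧ ∃ u, G.Adj u v ∧ G.dist v₀ u < G.dist v₀ v ∧ s(u, v) ∈ C}

/-- The ladder set `L_{u,v}`: classes of the signature `σ_{u,v}` having an
edge incident to `u`. -/
def ladder (G : SimpleGraph V) (u v : V) : Set (Set (Sym2 V)) :=
  {C | C ∈ signature G u v ∧ ∃ w, G.Adj u w ∧ s(u, w) ∈ C}

/-- A POF each of whose classes has an edge outgoing from `u`. -/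
def OutgoingPOF (G : SimpleGraph V) (v₀ u : V) (L : Set (Set (Sym2 V))) : Prop :=
  IsPOF G L ∧ ∀ C ∈ L, ∃ w, G.Adj u w ∧ G.dist v₀ u < G.dist v₀ w ∧ s(u, w) ∈ C

/-- A POF each of whose classes has an edge ingoing to `u`. -/
def IngoingPOF (G : SimpleGraph V) (v₀ u : V) (X : Set (Set (Sym2 V))) : Prop :=
  IsPOF G X ∧ ∀ C ∈ X, ∃ w, G.Adj w u ∧ G.dist v₀ w < G.dist v₀ u ∧ s(w, u) ∈ C

/-- `m` is a median of the triple `x, y, z`. -/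
def IsMedian (G : SimpleGraph V) (x y z m : V) : Prop :=
  m ∈ interval G x y ∧ m ∈ interval G y z ∧ m ∈ interval G z x

/-- `b` is the milestone following `a` on the way to `v`: `b` is the anti-basis of
the induced hypercube with basis `a` whose Θ-classes are the ladder set `L_{a,v}`. -/
def NextMilestone (G : SimpleGraph V) (v₀ v a b : V) : Prop :=
  ∃ S : Set V, IsInducedCube G S ∧ IsBasis G v₀ S a ∧ IsAntiBasis G v₀ S b ∧
    cubeClasses G S = ladder G a v

/-- The milestone set `Π(u,v)`: vertices obtained from `u` by iterating the
next-milestone step towards `v`. -/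
def MilestoneSet (G : SimpleGraph V) (v₀ u v : V) : Set V :=
  {p | Relation.ReflTransGen (fun a b => NextMilestone G v₀ v a b) u p}

/-- The penultimate milestone `π̄(u,v)`: the milestone of `Π(u,v)` other than `v`
closest to `v`, i.e. whose next milestone is `v` itself. -/
def IsPenultimate (G : SimpleGraph V) (v₀ u v p : V) : Prop :=
  p ∈ MilestoneSet G v₀ u v ∧ p ≠ v ∧ NextMilestone G v₀ v p v

/-- A convex set of vertices. -/
def ConvexSet (G : SimpleGraph V) (H : Set V) : Prop :=
  ∀ u ∈ H, ∀ v ∈ H, interval G u v ⊆ H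

/-- A gated set of vertices: each vertex has a gate in `H`. -/
def GatedSet (G : SimpleGraph V) (H : Set V) : Prop :=
  ∀ x : V, ∃ g ∈ H, ∀ h ∈ H, g ∈ interval G x h


open SimpleGraph

section Basics
variable {G : SimpleGraph V} (hmed : MedianGraph G)

lemma conn (hmed : MedianGraph G) : G.Connected := hmed.1

lemma tri (hmed : MedianGraph G) (x y z : V) : G.dist x z ≤ G.dist x y + G.dist y z :=
  hmed.1.dist_triangle

lemma dist0 (hmed : MedianGraph G) {x y : V} (h : G.dist x y = 0) : x = y := by
  rcases SimpleGraph.dist_eq_zero_iff_eq_or_not_reachable.mp h with h | h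
  · exact h
  · exact absurd (hmed.1.preconnected x y) h

lemma adj_dist1 {x y : V} (h : G.Adj x y) : G.dist x y = 1 :=
  dist_eq_one_iff_adj.mpr h

include hmed in
lemma not_equid {x y : V} (z : V) (hxy : G.Adj x y) : G.dist z x ≠ G.dist z y := by
  intro heq
  obtain ⟨m, ⟨hm1, hm2, hm3⟩, _⟩ := hmed.2 x y z
  have hdxy : G.dist x y = 1 := adj_dist1 hxy
  have h1 : G.dist x m + G.dist m y = 1 := by
    have := hm1; simpa [interval, hdxy] using this
  have h2 : G.dist y m + G.dist m z = G.dist y z := hm2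
  have h3 : G.dist z m + G.dist m x = G.dist z x := hm3
  have hzx : G.dist x z = G.dist z x := G.dist_comm ..
  have hzy : G.dist y z = G.dist z y := G.dist_comm ..
  have hcases : G.dist x m = 0 ∨ G.dist m y = 0 := by omega
  rcases hcases with h0 | h0
  · have hmx : m = x := (dist0 hmed h0).symm
    rw [hmx] at h2 h3
    have hyx : G.dist y x = 1 := by rw [G.dist_comm]; exact hdxy
    have hxx : G.dist x x = 0 := by simp
    omega
  · have hmy : m = y := dist0 hmed h0
    rw [hmy] at h2 h3
    have hxy1 : G.dist y x = 1 := by rw [G.dist_comm]; exact hdxy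
    have hyy : G.dist y y = 0 := by simp
    omega

include hmed in
/-- adjacent vertices: distances from any z differ by exactly one -/
lemma adj_step {x y : V} (z : V) (hxy : G.Adj x y) :
    G.dist z y = G.dist z x + 1 ∨ G.dist z x = G.dist z y + 1 := by
  have h1 : G.dist z y ≤ G.dist z x + G.dist x y := tri hmed z x y
  have h2 : G.dist z x ≤ G.dist z y + G.dist y x := tri hmed z y x
  have h3 : G.dist x y = 1 := adj_dist1 hxy
  have h4 : G.dist y x = 1 := adj_dist1 hxy.symm
  have h5 := not_equid hmed z hxy
  omega

include hmed in
lemma exists_step {x y : V} (hxy : x ≠ y) :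
    ∃ z, G.Adj x z ∧ G.dist z y + 1 = G.dist x y := by
  obtain ⟨w, hw⟩ := (hmed.1 x y).exists_walk_length_eq_dist
  cases w with
  | nil => exact absurd rfl hxy
  | cons ha p =>
    rename_i z
    refine ⟨z, ha, ?_⟩
    have h1 : G.dist z y ≤ p.length := dist_le p
    have h2 : G.dist x y ≤ G.dist x z + G.dist z y := tri hmed x z y
    have h3 : G.dist x z ≤ 1 := by simpa using dist_le (Walk.cons ha Walk.nil)
    simp only [Walk.length_cons] at hw
    have h0 : G.dist x y ≠ 0 := fun h => hxy (dist0 hmed h)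
    omega

include hmed in
/-- the median of a triple, with all six distance equations -/
lemma med_spec (x y z : V) : ∃ m : V,
    G.dist x m + G.dist m y = G.dist x y ∧
    G.dist y m + G.dist m z = G.dist y z ∧
    G.dist z m + G.dist m x = G.dist z x := by
  obtain ⟨m, ⟨h1, h2, h3⟩, _⟩ := hmed.2 x y z
  exact ⟨m, h1, h2, h3⟩

include hmed in
lemma med_unique {x y z m m' : V}
    (h1 : G.dist x m + G.dist m y = G.dist x y)
    (h2 : G.dist y m + G.dist m z = G.dist y z)
    (h3 : G.dist z m + G.dist m x = G.dist z x)
    (h1' : G.dist x m' + G.dist m' y = G.dist x y)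
    (h2' : G.dist y m' + G.dist m' z = G.dist y z)
    (h3' : G.dist z m' + G.dist m' x = G.dist z x) : m = m' := by
  obtain ⟨n, _, hu⟩ := hmed.2 x y z
  have := hu m ⟨h1, h2, h3⟩
  have := hu m' ⟨h1', h2', h3'⟩
  simp_all


lemma dc (G : SimpleGraph V) (x y : V) : G.dist x y = G.dist y x := G.dist_comm ..

include hmed in
/-- no two distinct vertices have three common neighbours (K_{2,3}-free) -/
lemma no_k23 {a c b d m : V} (hac : a ≠ c)
    (hb1 : G.Adj a b) (hb2 : G.Adj c b) (hd1 : G.Adj a d) (hd2 : G.Adj c d)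
    (hm1 : G.Adj a m) (hm2 : G.Adj c m)
    (hbd : b ≠ d) (hbm : b ≠ m) (hdm : d ≠ m) : False := by
  have dist2 : ∀ p q : V, G.Adj a p → G.Adj c p → G.Adj a q → G.Adj c q → p ≠ q →
      G.dist p q = 2 := by
    intro p q hp1 hp2 hq1 hq2 hpq
    have hnadj : ¬ G.Adj p q := by
      intro h
      exact not_equid hmed a h (by rw [adj_dist1 hp1, adj_dist1 hq1])
    have h1 : G.dist p q ≤ G.dist p a + G.dist a q := tri hmed p a q
    have h2 : G.dist p a = 1 := by rw [dc]; exact adj_dist1 hp1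
    have h3 : G.dist a q = 1 := adj_dist1 hq1
    have h4 : G.dist p q ≠ 1 := fun h => hnadj (dist_eq_one_iff_adj.mp h)
    have h0 : G.dist p q ≠ 0 := fun h => hpq (dist0 hmed h)
    omega
  have hbd2 := dist2 b d hb1 hb2 hd1 hd2 hbd
  have hbm2 := dist2 b m hb1 hb2 hm1 hm2 hbm
  have hdm2 := dist2 d m hd1 hd2 hm1 hm2 hdm
  have hmid : ∀ x : V, G.Adj x b → G.Adj x d → G.Adj x m →
      (G.dist b x + G.dist x d = G.dist b d ∧
       G.dist d x + G.dist x m = G.dist d m ∧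
       G.dist m x + G.dist x b = G.dist m b) := by
    intro x h1 h2 h3
    have e1 : G.dist b x = 1 := by rw [dc]; exact adj_dist1 h1
    have e2 : G.dist x d = 1 := adj_dist1 h2
    have e3 : G.dist d x = 1 := by rw [dc]; exact adj_dist1 h2
    have e4 : G.dist x m = 1 := adj_dist1 h3
    have e5 : G.dist m x = 1 := by rw [dc]; exact adj_dist1 h3
    have e6 : G.dist x b = 1 := adj_dist1 h1
    have e7 : G.dist m b = 2 := by rw [dc]; exact hbm2
    omega
  obtain ⟨e1, e2, e3⟩ := hmid a hb1 hd1 hm1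
  obtain ⟨f1, f2, f3⟩ := hmid c hb2 hd2 hm2
  exact hac (med_unique hmed e1 e2 e3 f1 f2 f3)

include hmed in
/-- grading of squares: bottom n, two sides n+1 forces top n+2. -/
lemma square_grade {a b c d : V} (z : V)
    (hab : G.Adj a b) (hbc : G.Adj b c) (hcd : G.Adj c d) (hda : G.Adj d a)
    (hac : a ≠ c) (hbd : b ≠ d)
    (h1 : G.dist z b = G.dist z a + 1) (h2 : G.dist z d = G.dist z a + 1) :
    G.dist z c = G.dist z a + 2 := by
  have hc1 := adj_step hmed z hbc
  rcases hc1 with h | h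
  · omega
  · -- dist z c = dist z a
    have hzc : G.dist z c = G.dist z a := by omega
    have hn0 : G.dist z a ≠ 0 := by
      intro h0
      have hza : z = a := dist0 hmed h0
      have : z = c := dist0 hmed (by omega)
      exact hac (hza ▸ this.symm ▸ rfl)
    have hdac : G.dist a c = 2 := by
      have hnadj : ¬ G.Adj a c := by
        intro h'
        refine not_equid hmed b h' ?_
        have : G.dist b a = 1 := by rw [dc]; exact adj_dist1 hab
        rw [this, adj_dist1 hbc]
      have t1 : G.dist a c ≤ G.dist a b + G.dist b c := tri hmed a b c
      have t2 : G.dist a b = 1 := adj_dist1 hab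
      have t3 : G.dist b c = 1 := adj_dist1 hbc
      have t4 : G.dist a c ≠ 1 := fun h' => hnadj (dist_eq_one_iff_adj.mp h')
      have t0 : G.dist a c ≠ 0 := fun h' => hac (dist0 hmed h')
      omega
    obtain ⟨m, e1, e2, e3⟩ := med_spec hmed a c z
    rw [hdac] at e1
    have c1 : G.dist c m = G.dist m c := dc ..
    have c2 : G.dist z m = G.dist m z := dc ..
    have c3 : G.dist c z = G.dist z c := dc ..
    have c4 : G.dist z a = G.dist a z := dc ..
    have c5 : G.dist a m = G.dist m a := dc ..
    rw [c3, hzc] at e2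
    have hma : G.dist a m = 1 := by omega
    have hmc : G.dist m c = 1 := by omega
    have hmz : G.dist z m + 1 = G.dist z a := by omega
    have hmb : m ≠ b := by intro h'; rw [h'] at hmz; omega
    have hmd : m ≠ d := by intro h'; rw [h'] at hmz; omega
    exact (no_k23 hmed hac hab hbc.symm hda.symm hcd
      (dist_eq_one_iff_adj.mp hma) (dist_eq_one_iff_adj.mp hmc).symm
      hbd hmb.symm hmd.symm).elim

end Basics

-- PART 2 : square completion, Theta basics, square sides
section Part2
variable {G : SimpleGraph V} (hmed : MedianGraph G)

include hmed in
/-- two distinct neighbours of x that both step towards t complete to a square -/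
lemma square_complete {x c y t : V}
    (hxc : G.Adj x c) (hxy : G.Adj x y) (hcy : c ≠ y)
    (hc : G.dist c t + 1 = G.dist x t) (hy : G.dist y t + 1 = G.dist x t) :
    ∃ m, G.Adj c m ∧ G.Adj y m ∧ G.dist m t + 2 = G.dist x t ∧ m ≠ x := by
  have hnadj : ¬ G.Adj c y := by
    intro h
    refine not_equid hmed x h ?_
    rw [adj_dist1 hxc, adj_dist1 hxy]
  have hdcy : G.dist c y = 2 := by
    have t1 : G.dist c y ≤ G.dist c x + G.dist x y := tri hmed c x y
    have t2 : G.dist c x = 1 := by rw [dc]; exact adj_dist1 hxc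
    have t3 : G.dist x y = 1 := adj_dist1 hxy
    have t4 : G.dist c y ≠ 1 := fun h => hnadj (dist_eq_one_iff_adj.mp h)
    have t0 : G.dist c y ≠ 0 := fun h => hcy (dist0 hmed h)
    omega
  obtain ⟨m, e1, e2, e3⟩ := med_spec hmed c y t
  rw [hdcy] at e1
  have c1 : G.dist y m = G.dist m y := dc ..
  have c2 : G.dist t m = G.dist m t := dc ..
  have c3 : G.dist y t = G.dist t y := dc ..
  have c4 : G.dist c t = G.dist t c := dc ..
  have c5 : G.dist c m = G.dist m c := dc ..
  have hcm : G.dist c m = 1 := by omega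
  have hym : G.dist m y = 1 := by omega
  have hmt : G.dist m t + 2 = G.dist x t := by omega
  refine ⟨m, dist_eq_one_iff_adj.mp hcm, (dist_eq_one_iff_adj.mp hym).symm, hmt, ?_⟩
  intro h; rw [h] at hmt; omega

end Part2

section Part3
variable {G : SimpleGraph V}

lemma theta0_symm {e f : Sym2 V} (h : Theta0 G e f) : Theta0 G f e := by
  obtain ⟨u, v, x, y, ⟨h1, h2, h3, h4, h5, h6⟩, he, hf⟩ := h
  exact ⟨x, y, u, v, ⟨h2, h1, h3.symm, h4.symm, fun hh => h6 hh.symm, fun hh => h5 hh.symm⟩, hf, he⟩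

lemma theta_symm {e f : Sym2 V} (h : Theta G e f) : Theta G f e := by
  obtain ⟨he, hf, hc⟩ := h
  exact ⟨hf, he, (@Relation.ReflTransGen.stdSymm _ (Theta0 G) ⟨fun _ _ hh => theta0_symm hh⟩).symm _ _ hc⟩

lemma theta_trans {e f g : Sym2 V} (h1 : Theta G e f) (h2 : Theta G f g) : Theta G e g :=
  ⟨h1.1, h2.2.1, h1.2.2.trans h2.2.2⟩

lemma theta_refl {e : Sym2 V} (he : e ∈ G.edgeSet) : Theta G e e :=
  ⟨he, he, Relation.ReflTransGen.refl⟩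

lemma theta0_edge {e f : Sym2 V} (h : Theta0 G e f) : f ∈ G.edgeSet := by
  obtain ⟨u, v, x, y, hsq, he, hf⟩ := h
  rw [hf]; exact hsq.2.1

/-- extend a Theta relation across one square -/
lemma theta_tail {e f g : Sym2 V} (h : Theta G e f) (h0 : Theta0 G f g) : Theta G e g :=
  ⟨h.1, theta0_edge h0, h.2.2.tail h0⟩

lemma class_eq_classOf {C : Set (Sym2 V)} (hC : ThetaClass G C) {e : Sym2 V} (he : e ∈ C) :
    C = {f | Theta G e f} := by
  obtain ⟨g, hg, rfl⟩ := hC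
  have hge : Theta G g e := he
  ext f
  constructor
  · intro hf; exact theta_trans (theta_symm hge) hf
  · intro hf; exact theta_trans hge hf

lemma class_mem_edge {C : Set (Sym2 V)} (hC : ThetaClass G C) {e : Sym2 V} (he : e ∈ C) :
    e ∈ G.edgeSet := by
  obtain ⟨g, hg, rfl⟩ := hC
  exact he.2.1

lemma class_unique {C C' : Set (Sym2 V)} (hC : ThetaClass G C) (hC' : ThetaClass G C')
    {e : Sym2 V} (he : e ∈ C) (he' : e ∈ C') : C = C' := by
  rw [class_eq_classOf hC he, class_eq_classOf hC' he']

lemma classOf_thetaClass {e : Sym2 V} (he : e ∈ G.edgeSet) : ThetaClass G {f | Theta G e f} :=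
  ⟨e, he, rfl⟩

lemma mem_classOf_self {e : Sym2 V} (he : e ∈ G.edgeSet) : e ∈ {f | Theta G e f} :=
  theta_refl he

variable (hmed : MedianGraph G)

include hmed in
/-- one-directional square side transfer -/
lemma square_sides_dir {u v x y : V} (hsq : IsSquare G u v x y) (z : V)
    (h : G.dist z u < G.dist z v) : G.dist z x < G.dist z y := by
  obtain ⟨h1, h2, h3, h4, h5, h6⟩ := hsq
  -- edges: u-v, x-y, u-x, v-y ; cycle u,v,y,x
  have huv := adj_step hmed z h1
  have hux := adj_step hmed z h3
  have hvy := adj_step hmed z h4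
  have hxy := adj_step hmed z h2
  have hα : G.dist z v = G.dist z u + 1 := by omega
  rcases hux with hx | hx
  · -- dist z x = dist z u + 1 : grade square u,v,y,x at bottom u
    have hy' : G.dist z y = G.dist z u + 2 := by
      refine square_grade hmed z h1 h4 h2.symm h3.symm h5 h6 ?_ ?_ <;> omega
    omega
  · -- dist z x = dist z u - 1 : then y is forced to dist z u
    omega

include hmed in
lemma square_sides {u v x y : V} (hsq : IsSquare G u v x y) (z : V) :
    (G.dist z u < G.dist z v ↔ G.dist z x < G.dist z y) := by
  constructor
  · exact square_sides_dir hmed hsq z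
  · intro h
    obtain ⟨h1, h2, h3, h4, h5, h6⟩ := hsq
    exact square_sides_dir hmed ⟨h2, h1, h3.symm, h4.symm,
      fun hh => h6 hh.symm, fun hh => h5 hh.symm⟩ z h

end Part3

section Part4
variable {G : SimpleGraph V} (hmed : MedianGraph G)

include hmed in
lemma crossing_theta_aux (n : ℕ) : ∀ {x y a b : V}, G.Adj x y → G.Adj a b →
    G.dist a x = n → G.dist a x < G.dist a y → G.dist b y < G.dist b x →
    Theta G s(x,y) s(a,b) := by
  induction n with
  | zero =>
    intro x y a b hxy hab h0 h1 h2
    have hax : a = x := dist0 hmed h0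
    have hbx : G.dist b x ≤ 1 := by
      rw [← hax]
      have : G.dist b a = G.dist a b := dc ..
      rw [this, adj_dist1 hab]
    have hby : b = y := dist0 hmed (by omega)
    rw [hax, hby]
    exact theta_refl (G.mem_edgeSet.mpr hxy)
  | succ n ih =>
    intro x y a b hxy hab h0 h1 h2
    have s1 := adj_step hmed a hxy
    have s2 := adj_step hmed b hxy
    have s3 := adj_step hmed x hab
    have s4 := adj_step hmed y hab
    have c1 : G.dist a x = G.dist x a := dc ..
    have c2 : G.dist a y = G.dist y a := dc ..
    have c3 : G.dist b x = G.dist x b := dc ..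
    have c4 : G.dist b y = G.dist y b := dc ..
    have hay : G.dist a y = n + 2 := by omega
    have hbx : G.dist b x = n + 2 := by omega
    have hby : G.dist b y = n + 1 := by omega
    have hax : a ≠ x := by
      intro h; rw [h] at h0
      rw [SimpleGraph.dist_self] at h0; omega
    obtain ⟨a₁, ha1, hd1⟩ := exists_step hmed hax
    have hd1' : G.dist a₁ x = n := by omega
    have s5 := adj_step hmed y ha1
    have c5 : G.dist a₁ x = G.dist x a₁ := dc ..
    have c6 : G.dist a₁ y = G.dist y a₁ := dc ..
    have t1 : G.dist a₁ y ≤ G.dist a₁ x + G.dist x y := tri hmed a₁ x y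
    have hxy1 : G.dist x y = 1 := adj_dist1 hxy
    have hd1y : G.dist a₁ y = n + 1 := by omega
    have ha1b : a₁ ≠ b := by intro h; rw [h] at hd1'; omega
    obtain ⟨m, hm1, hm2, hm3, hm4⟩ := square_complete hmed (x := a) (c := a₁) (y := b)
      (t := y) ha1 hab ha1b (by omega) (by omega)
    have hmy : G.dist m y = n := by omega
    have s6 := adj_step hmed x hm1
    have s7 := adj_step hmed x hm2
    have c7 : G.dist m x = G.dist x m := dc ..
    have c8 : G.dist m y = G.dist y m := dc ..
    have hmx : G.dist m x = n + 1 := by omega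
    have ihh : Theta G s(x,y) s(a₁,m) := ih hxy hm1 hd1' (by omega) (by omega)
    refine theta_tail ihh ⟨a₁, m, a, b, ⟨hm1, hab, ha1.symm, hm2.symm, ha1b, hm4⟩, rfl, rfl⟩

include hmed in
/-- KEY1 : an edge crossing the cut of edge (x,y) is Θ-related to it -/
lemma crossing_theta {x y a b : V} (hxy : G.Adj x y) (hab : G.Adj a b)
    (h1 : G.dist a x < G.dist a y) (h2 : G.dist b y < G.dist b x) :
    Theta G s(x,y) s(a,b) :=
  crossing_theta_aux hmed (G.dist a x) hxy hab rfl h1 h2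

include hmed in
/-- transfer of the side-function along Θ, up to global flip -/
lemma theta_rep {c₀ d₀ : V} (hc0 : G.Adj c₀ d₀) {f : Sym2 V}
    (h : Relation.ReflTransGen (Theta0 G) s(c₀,d₀) f) :
    ∃ c d : V, f = s(c,d) ∧ G.Adj c d ∧
      ∀ z, (G.dist z c < G.dist z d ↔ G.dist z c₀ < G.dist z d₀) := by
  induction h with
  | refl => exact ⟨c₀, d₀, rfl, hc0, fun z => Iff.rfl⟩
  | tail h1 h2 ih =>
    obtain ⟨c, d, rfl, hcd, hiff⟩ := ih
    obtain ⟨u, v, x', y', hsq, he, hf⟩ := h2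
    rw [Sym2.eq_iff] at he
    rcases he with ⟨rfl, rfl⟩ | ⟨rfl, rfl⟩
    · refine ⟨x', y', hf, hsq.2.1, fun z => ?_⟩
      rw [← square_sides hmed hsq z]
      exact hiff z
    · obtain ⟨h1', h2', h3', h4', h5', h6'⟩ := hsq
      have hsq' : IsSquare G c d y' x' := ⟨hcd, h2'.symm, h4', h3', h6', h5'⟩
      refine ⟨y', x', hf.trans (Sym2.eq_swap), h2'.symm, fun z => ?_⟩
      rw [← square_sides hmed hsq' z]
      exact hiff z

/-- `z` and `w` on the same side of the Θ-class `C` -/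
def SameSide (G : SimpleGraph V) (C : Set (Sym2 V)) (z w : V) : Prop :=
  ∀ c d : V, G.Adj c d → s(c,d) ∈ C →
    (G.dist z c < G.dist z d ↔ G.dist w c < G.dist w d)

lemma sameSide_refl {C : Set (Sym2 V)} (z : V) : SameSide G C z z :=
  fun _ _ _ _ => Iff.rfl

lemma sameSide_symm {C : Set (Sym2 V)} {z w : V} (h : SameSide G C z w) : SameSide G C w z :=
  fun c d h1 h2 => (h c d h1 h2).symm

lemma sameSide_trans {C : Set (Sym2 V)} {z w t : V} (h : SameSide G C z w)
    (h' : SameSide G C w t) : SameSide G C z t :=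
  fun c d h1 h2 => (h c d h1 h2).trans (h' c d h1 h2)

lemma class_rep {C : Set (Sym2 V)} (hC : ThetaClass G C) :
    ∃ c d : V, G.Adj c d ∧ s(c,d) ∈ C := by
  obtain ⟨e, he, rfl⟩ := hC
  obtain ⟨⟨c, d⟩, rfl⟩ := Quot.exists_rep e
  exact ⟨c, d, G.mem_edgeSet.mp he, theta_refl he⟩

include hmed in
/-- anchoring : same-side w.r.t. one edge of the class decides it -/
lemma side_anchor {C : Set (Sym2 V)} (hC : ThetaClass G C) {c d : V}
    (hcd : G.Adj c d) (hm : s(c,d) ∈ C) (z w : V) :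
    SameSide G C z w ↔ (G.dist z c < G.dist z d ↔ G.dist w c < G.dist w d) := by
  constructor
  · intro h; exact h c d hcd hm
  · intro h c' d' hcd' hm'
    have ht : Theta G s(c,d) s(c',d') := by
      have := class_eq_classOf hC hm
      rw [this] at hm'; exact hm'
    obtain ⟨c₁, d₁, he, hadj, hiff⟩ := theta_rep hmed hcd ht.2.2
    rw [Sym2.eq_iff] at he
    rcases he with ⟨rfl, rfl⟩ | ⟨rfl, rfl⟩
    · rw [hiff z, hiff w]; exact h
    · have hz := hiff z
      have hw := hiff w
      have n1 := not_equid hmed z hadj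
      have n2 := not_equid hmed w hadj
      have n3 := not_equid hmed z hcd
      have n4 := not_equid hmed w hcd
      constructor <;> intro hh <;> omega

include hmed in
/-- an edge whose endpoints are split by the class C belongs to C -/
lemma cross_mem {C : Set (Sym2 V)} (hC : ThetaClass G C) {a b : V}
    (hab : G.Adj a b) (h : ¬ SameSide G C a b) : s(a,b) ∈ C := by
  obtain ⟨c, d, hcd, hm⟩ := class_rep hC
  rw [side_anchor hmed hC hcd hm] at h
  have n1 := not_equid hmed a hcd
  have n2 := not_equid hmed b hcd
  have hcc := class_eq_classOf hC hm
  rcases Classical.em (G.dist a c < G.dist a d) with h1 | h1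
  · have h2 : G.dist b d < G.dist b c := by omega
    rw [hcc]; exact crossing_theta hmed hcd hab h1 h2
  · have h1' : G.dist b c < G.dist b d := by omega
    have h2' : G.dist a d < G.dist a c := by omega
    rw [hcc]
    have := crossing_theta hmed hcd hab.symm h1' h2'
    rwa [Sym2.eq_swap (a := b)] at this
end Part4

section Part5
variable {G : SimpleGraph V} (hmed : MedianGraph G)

lemma walk_same_side {C : Set (Sym2 V)} (hmed : MedianGraph G) (hC : ThetaClass G C)
    {z w : V} (h : (G.deleteEdges C).Reachable z w) : SameSide G C z w := by
  obtain ⟨p⟩ := h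
  induction p with
  | nil => exact sameSide_refl _
  | cons ha q ih =>
    rename_i u u' u''
    rw [SimpleGraph.deleteEdges_adj] at ha
    have h1 : SameSide G C u u' := by
      by_contra hh
      exact ha.2 (cross_mem hmed hC ha.1 hh)
    exact sameSide_trans h1 ih

lemma mem_interval {z w t : V} (h : t ∈ interval G z w) :
    G.dist z t + G.dist t w = G.dist z w := h

lemma mem_interval' {z w t : V} (h : G.dist z t + G.dist t w = G.dist z w) :
    t ∈ interval G z w := h

include hmed in
lemma int_trans {z w t z₁ : V} (ht : t ∈ interval G z w) (hz : z₁ ∈ interval G z t) :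
    z₁ ∈ interval G z w ∧ t ∈ interval G z₁ w := by
  have ht' := mem_interval ht
  have hz' := mem_interval hz
  have t1 : G.dist z₁ w ≤ G.dist z₁ t + G.dist t w := tri hmed ..
  have t2 : G.dist z w ≤ G.dist z z₁ + G.dist z₁ w := tri hmed ..
  exact ⟨mem_interval' (by omega), mem_interval' (by omega)⟩

include hmed in
lemma edge_not_in_class_of_interval {C : Set (Sym2 V)} (hC : ThetaClass G C)
    {z w z₁ : V} (hs : SameSide G C z w) (hadj : G.Adj z z₁)
    (hz1 : z₁ ∈ interval G z w) : s(z,z₁) ∉ C ∧ SameSide G C z z₁ := by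
  have hne : s(z,z₁) ∉ C := by
    intro hm
    have h1 := hs z z₁ hadj hm
    have h2 : G.dist z z = 0 := SimpleGraph.dist_self ..
    have h3 : G.dist z z₁ = 1 := adj_dist1 hadj
    have h4 : G.dist w z = G.dist z w := dc ..
    have h5 : G.dist w z₁ = G.dist z₁ w := dc ..
    have := mem_interval hz1
    omega
  refine ⟨hne, ?_⟩
  by_contra h
  exact hne (cross_mem hmed hC hadj h)

include hmed in
lemma reach_of_same {C : Set (Sym2 V)} (hC : ThetaClass G C) :
    ∀ n z w, G.dist z w = n → SameSide G C z w → (G.deleteEdges C).Reachable z w := by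
  intro n
  induction n using Nat.strong_induction_on with
  | _ n ih =>
    intro z w hd hs
    by_cases hzw : z = w
    · subst hzw; rfl
    obtain ⟨z₁, hz1, hd1⟩ := exists_step hmed hzw
    have hint : z₁ ∈ interval G z w := mem_interval' (by rw [adj_dist1 hz1]; omega)
    obtain ⟨hne, hss⟩ := edge_not_in_class_of_interval hmed hC hs hz1 hint
    have h0 : G.dist z w ≠ 0 := fun h => hzw (dist0 hmed h)
    have hr : (G.deleteEdges C).Reachable z₁ w :=
      ih (G.dist z₁ w) (by omega) z₁ w rfl (sameSide_trans (sameSide_symm hss) hs)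
    have hadj : (G.deleteEdges C).Adj z z₁ := by
      rw [SimpleGraph.deleteEdges_adj]; exact ⟨hz1, hne⟩
    exact hadj.reachable.trans hr

include hmed in
lemma sep_iff {C : Set (Sym2 V)} (hC : ThetaClass G C) (z w : V) :
    Separates G C z w ↔ ¬ SameSide G C z w := by
  constructor
  · intro h hs
    exact h (reach_of_same hmed hC (G.dist z w) z w rfl hs)
  · intro h hr
    exact h (walk_same_side hmed hC hr)

include hmed in
/-- convexity of halfspaces -/
lemma interval_side {C : Set (Sym2 V)} (hC : ThetaClass G C) :
    ∀ n z w t, G.dist z t = n → SameSide G C z w → t ∈ interval G z w →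
      SameSide G C z t := by
  intro n
  induction n using Nat.strong_induction_on with
  | _ n ih =>
    intro z w t hd hs hint
    by_cases hzt : z = t
    · subst hzt; exact sameSide_refl _
    obtain ⟨z₁, hz1, hd1⟩ := exists_step hmed hzt
    have hint1 : z₁ ∈ interval G z t := mem_interval' (by rw [adj_dist1 hz1]; omega)
    obtain ⟨hin, hin2⟩ := int_trans hmed hint hint1
    obtain ⟨hne, hss⟩ := edge_not_in_class_of_interval hmed hC hs hz1 hin
    have hrec : SameSide G C z₁ t :=
      ih (G.dist z₁ t) (by
        have h0 : G.dist z t ≠ 0 := fun h => hzt (dist0 hmed h)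
        omega) z₁ w t (by omega) (sameSide_trans (sameSide_symm hss) hs) hin2
    exact sameSide_trans hss hrec

include hmed in
lemma two_sided {C : Set (Sym2 V)} (hC : ThetaClass G C) {z w t : V}
    (h1 : ¬ SameSide G C z t) (h2 : ¬ SameSide G C t w) : SameSide G C z w := by
  obtain ⟨c, d, hcd, hm⟩ := class_rep hC
  rw [side_anchor hmed hC hcd hm] at h1 h2 ⊢
  tauto

end Part5

section Part5b
variable {G : SimpleGraph V} (hmed : MedianGraph G)

lemma edge_split {C : Set (Sym2 V)} {a b : V} (hab : G.Adj a b) (hm : s(a,b) ∈ C) :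
    ¬ SameSide G C a b := by
  intro h
  have h1 := h a b hab hm
  have h2 : G.dist a a = 0 := SimpleGraph.dist_self ..
  have h3 : G.dist a b = 1 := adj_dist1 hab
  have h4 : G.dist b a = 1 := adj_dist1 hab.symm
  have h5 : G.dist b b = 0 := SimpleGraph.dist_self ..
  omega

lemma class_closed {C : Set (Sym2 V)} (hC : ThetaClass G C) {f g : Sym2 V}
    (hf : f ∈ C) (h : Theta0 G f g) : g ∈ C := by
  have h1 := class_eq_classOf hC hf
  rw [h1]
  exact theta_tail (theta_refl (class_mem_edge hC hf)) h

include hmed in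
lemma split_edge_iff {C : Set (Sym2 V)} (hC : ThetaClass G C) {a b : V} (hab : G.Adj a b) :
    ¬ SameSide G C a b ↔ s(a,b) ∈ C :=
  ⟨cross_mem hmed hC hab, edge_split hab⟩

include hmed in
lemma interval_split {C : Set (Sym2 V)} (hC : ThetaClass G C) {z w t : V}
    (ht : t ∈ interval G z w) : SameSide G C z t ∨ SameSide G C t w := by
  by_contra h
  push_neg at h
  obtain ⟨h1, h2⟩ := h
  have h3 : SameSide G C z w := two_sided hmed hC h1 h2
  exact h1 (interval_side hmed hC (G.dist z t) z w t rfl h3 ht)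

include hmed in
lemma far_step {C : Set (Sym2 V)} (hC : ThetaClass G C) {a b w : V}
    (hab : G.Adj a b) (hm : s(a,b) ∈ C) (hw : ¬ SameSide G C a w) :
    G.dist b w + 1 = G.dist a w := by
  have h1 := adj_step hmed w hab
  have c1 : G.dist w a = G.dist a w := dc ..
  have c2 : G.dist w b = G.dist b w := dc ..
  rcases h1 with h | h
  · -- dist w b = dist w a + 1 : a ∈ I(b,w), contradiction
    exfalso
    have hint : a ∈ interval G b w := mem_interval' (by
      have : G.dist b a = 1 := adj_dist1 hab.symm
      omega)
    rcases interval_split hmed hC hint with hs | hs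
    · exact edge_split hab.symm (by rwa [Sym2.eq_swap] at hm) hs
    · exact hw hs
  · omega

include hmed in
lemma prop_along {C : Set (Sym2 V)} (hC : ThetaClass G C) :
    ∀ n x g t c, G.dist x g = n → G.Adj x c → s(x,c) ∈ C → ¬ SameSide G C x t →
      g ∈ interval G x t → SameSide G C x g →
      ∃ c', G.Adj g c' ∧ s(g,c') ∈ C := by
  intro n
  induction n using Nat.strong_induction_on with
  | _ n ih =>
    intro x g t c hd hxc hmc hxt hgi hxg
    by_cases hxg0 : x = g
    · exact ⟨c, hxg0 ▸ hxc, hxg0 ▸ hmc⟩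
    obtain ⟨x₁, hx1, hd1⟩ := exists_step hmed hxg0
    have hint1 : x₁ ∈ interval G x g := mem_interval' (by rw [adj_dist1 hx1]; omega)
    obtain ⟨hin, hin2⟩ := int_trans hmed hgi hint1
    have hnotin : s(x,x₁) ∉ C := by
      intro hm
      have hsplit : ¬ SameSide G C x₁ g := by
        intro h
        exact edge_split hx1 hm (sameSide_trans hxg (sameSide_symm h))
      have := far_step hmed hC hx1.symm (by rwa [Sym2.eq_swap] at hm) hsplit
      have h2 := mem_interval hint1
      have h3 : G.dist x x₁ = 1 := adj_dist1 hx1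
      omega
    have hsame : SameSide G C x x₁ := by
      by_contra h
      exact hnotin (cross_mem hmed hC hx1 h)
    have hcx1 : c ≠ x₁ := by
      intro h; rw [h] at hmc; exact hnotin hmc
    have hct : G.dist c t + 1 = G.dist x t := far_step hmed hC hxc hmc hxt
    have hx1t : G.dist x₁ t + 1 = G.dist x t := by
      have := mem_interval hin
      have : G.dist x x₁ = 1 := adj_dist1 hx1
      have h2 := mem_interval hin
      omega
    obtain ⟨m, hm1, hm2, hm3, hm4⟩ := square_complete hmed (x := x) (c := c) (y := x₁)
      (t := t) hxc hx1 hcx1 hct hx1t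
    have hsq : IsSquare G x c x₁ m :=
      ⟨hxc, hm2, hx1, hm1, fun h => hm4 h.symm, hcx1⟩
    have hmem : s(x₁,m) ∈ C := class_closed hC hmc ⟨x, c, x₁, m, hsq, rfl, rfl⟩
    have h0 : G.dist x g ≠ 0 := fun h => hxg0 (dist0 hmed h)
    exact ih (G.dist x₁ g) (by omega) x₁ g t m rfl hm2 hmem
      (fun h => hxt (sameSide_trans hsame h)) hin2
      (sameSide_trans (sameSide_symm hsame) hxg)

include hmed in
/-- convex nonempty sets admit gates -/
lemma exists_gate {F : Set V}
    (hconv : ∀ f ∈ F, ∀ f' ∈ F, ∀ m, m ∈ interval G f f' → m ∈ F)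
    (hne : F.Nonempty) (p : V) :
    ∃ g ∈ F, ∀ h ∈ F, G.dist p g + G.dist g h = G.dist p h := by
  obtain ⟨f₀, hf₀⟩ := hne
  set D := {k : ℕ | ∃ f ∈ F, G.dist p f = k} with hD
  have hDne : D.Nonempty := ⟨G.dist p f₀, f₀, hf₀, rfl⟩
  obtain ⟨g, hg, hgd⟩ := Nat.sInf_mem hDne
  refine ⟨g, hg, fun h hh => ?_⟩
  obtain ⟨m, e1, e2, e3⟩ := med_spec hmed p g h
  have hmF : m ∈ F := hconv g hg h hh m (mem_interval' e2)
  have hmin : sInf D ≤ G.dist p m := Nat.sInf_le ⟨m, hmF, rfl⟩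
  have hmg : G.dist m g = 0 := by omega
  have : m = g := dist0 hmed hmg
  subst this
  have c1 : G.dist h m = G.dist m h := dc ..
  have c2 : G.dist h p = G.dist p h := dc ..
  have c3 : G.dist m p = G.dist p m := dc ..
  omega

end Part5b

section Part6
variable {G : SimpleGraph V}

/-- toggle lemmas -/
lemma tog_mem {k : ℕ} {A B : Finset (Fin k)} {i : Fin k} (h : i ∈ symmDiff A B) :
    symmDiff (symmDiff A {i}) B = (symmDiff A B).erase i := by
  have h' := Finset.mem_symmDiff.mp h
  ext j
  simp only [Finset.mem_symmDiff, Finset.mem_erase, Finset.mem_singleton]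
  by_cases hj : j = i
  · subst hj; tauto
  · tauto

lemma tog_not_mem {k : ℕ} {A B : Finset (Fin k)} {i : Fin k} (h : i ∉ symmDiff A B) :
    symmDiff (symmDiff A {i}) B = insert i (symmDiff A B) := by
  have h' : ¬ (i ∈ A ∧ i ∉ B ∨ i ∈ B ∧ i ∉ A) := fun hh => h (Finset.mem_symmDiff.mpr hh)
  ext j
  simp only [Finset.mem_symmDiff, Finset.mem_insert, Finset.mem_singleton]
  by_cases hj : j = i
  · subst hj; tauto
  · tauto

lemma tog_card_mem {k : ℕ} {A B : Finset (Fin k)} {i : Fin k} (h : i ∈ symmDiff A B) :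
    (symmDiff (symmDiff A {i}) B).card + 1 = (symmDiff A B).card := by
  rw [tog_mem h, Finset.card_erase_of_mem h]
  have : (symmDiff A B).card ≠ 0 := by
    intro hc
    rw [Finset.card_eq_zero] at hc
    rw [hc] at h
    simp at h
  omega

lemma tog_card_not_mem {k : ℕ} {A B : Finset (Fin k)} {i : Fin k} (h : i ∉ symmDiff A B) :
    (symmDiff (symmDiff A {i}) B).card = (symmDiff A B).card + 1 := by
  rw [tog_not_mem h, Finset.card_insert_of_notMem h]

lemma symmDiff_card_zero {k : ℕ} {A B : Finset (Fin k)} (h : (symmDiff A B).card = 0) :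
    A = B := by
  rw [Finset.card_eq_zero] at h
  exact symmDiff_eq_bot.mp h

lemma tog_adj {k : ℕ} (A : Finset (Fin k)) (i : Fin k) :
    (cubeGraph k).Adj A (symmDiff A {i}) := by
  show (symmDiff A (symmDiff A {i})).card = 1
  have : symmDiff A (symmDiff A {i}) = {i} := by
    rw [symmDiff_symmDiff_cancel_left]
  rw [this, Finset.card_singleton]

lemma tog_tog {k : ℕ} (A : Finset (Fin k)) (i : Fin k) :
    symmDiff (symmDiff A {i}) {i} = A := symmDiff_symmDiff_cancel_right ..

lemma cube_adj_toggle {k : ℕ} {A B : Finset (Fin k)} (h : (cubeGraph k).Adj A B) :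
    ∃ i, B = symmDiff A {i} := by
  have h' : (symmDiff A B).card = 1 := h
  obtain ⟨i, hi⟩ := Finset.card_eq_one.mp h'
  exact ⟨i, by rw [← symmDiff_symmDiff_cancel_left (a := A) (b := B), hi]⟩

/-- a concrete presentation of an induced cube -/
structure CubeSetup (G : SimpleGraph V) (S : Set V) (k : ℕ) where
  φ : Finset (Fin k) → V
  inj : Function.Injective φ
  memS : ∀ A, φ A ∈ S
  surj : ∀ s ∈ S, ∃ A, φ A = s
  adj : ∀ A B, (cubeGraph k).Adj A B ↔ G.Adj (φ A) (φ B)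

lemma cube_setup {S : Set V} {k : ℕ} (hS : IsCubeDim G S k) : Nonempty (CubeSetup G S k) := by
  obtain ⟨e⟩ := hS
  refine ⟨⟨fun A => (e.symm A : V), ?_, fun A => (e.symm A).2, ?_, ?_⟩⟩
  · intro A B h
    have : e.symm A = e.symm B := Subtype.ext h
    simpa using congrArg e this
  · intro s hs
    exact ⟨e ⟨s, hs⟩, by simp⟩
  · intro A B
    constructor
    · intro h
      have := e.symm.map_adj_iff.mpr h
      exact this
    · intro h
      exact e.symm.map_adj_iff.mp h

variable {S : Set V} {k : ℕ}

lemma cs_adj (cs : CubeSetup G S k) (A : Finset (Fin k)) (i : Fin k) :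
    G.Adj (cs.φ A) (cs.φ (symmDiff A {i})) :=
  (cs.adj ..).mp (tog_adj A i)

/-- walk between corners through cube edges -/
lemma corner_walk (cs : CubeSetup G S k) :
    ∀ n (A B : Finset (Fin k)), (symmDiff A B).card = n →
    ∃ w : G.Walk (cs.φ A) (cs.φ B), w.length = n ∧
      ∀ e ∈ w.edges, ∃ (D : Finset (Fin k)) (i : Fin k),
        e = s(cs.φ D, cs.φ (symmDiff D {i})) := by
  intro n
  induction n with
  | zero =>
    intro A B h
    have : A = B := symmDiff_card_zero h
    subst this
    exact ⟨SimpleGraph.Walk.nil, rfl, by simp⟩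
  | succ n ih =>
    intro A B h
    have hne : (symmDiff A B).Nonempty := by
      rw [← Finset.card_pos]; omega
    obtain ⟨i, hi⟩ := hne
    have hcard := tog_card_mem (A := A) (B := B) hi
    obtain ⟨w, hw1, hw2⟩ := ih (symmDiff A {i}) B (by omega)
    refine ⟨SimpleGraph.Walk.cons (cs_adj cs A i) w, by simp [hw1], ?_⟩
    intro e he
    rw [SimpleGraph.Walk.edges_cons] at he
    rcases List.mem_cons.mp he with h' | h'
    · exact ⟨A, i, h'⟩
    · exact hw2 e h'

variable (hmed : MedianGraph G)

include hmed in
/-- grading of an induced cube from a local minimum -/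
lemma cube_grade (cs : CubeSetup G S k) {v₀ : V} {A₀ : Finset (Fin k)}
    (hb : ∀ i, G.dist v₀ (cs.φ A₀) < G.dist v₀ (cs.φ (symmDiff A₀ {i}))) :
    ∀ n A, (symmDiff A A₀).card = n →
      G.dist v₀ (cs.φ A) = G.dist v₀ (cs.φ A₀) + n := by
  intro n
  induction n using Nat.strong_induction_on with
  | _ n ih =>
    intro A hA
    match n, hA with
    | 0, hA =>
      have : A = A₀ := symmDiff_card_zero hA
      subst this; simp
    | 1, hA =>
      obtain ⟨i, hi⟩ := Finset.card_eq_one.mp hA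
      have hAeq : A = symmDiff A₀ {i} := by
        have h2 : symmDiff A₀ (symmDiff A₀ A) = A := symmDiff_symmDiff_cancel_left ..
        rw [symmDiff_comm A₀ A, hi] at h2
        exact h2.symm
      subst hAeq
      have h1 := hb i
      have h2 := adj_step hmed v₀ (cs_adj cs A₀ i)
      omega
    | (m+2), hA =>
      have h2 : 1 < (symmDiff A A₀).card := by omega
      obtain ⟨i, hi, j, hj, hij⟩ := Finset.one_lt_card.mp h2
      set P := symmDiff A {i} with hP
      set Q := symmDiff A {j} with hQ
      set R := symmDiff (symmDiff A {i}) {j} with hR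
      have cP : (symmDiff P A₀).card = m + 1 := by
        have h' := tog_card_mem (A := A) (B := A₀) hi
        rw [← hP] at h'; omega
      have hjP : j ∈ symmDiff P A₀ := by
        rw [hP, tog_mem hi]
        exact Finset.mem_erase.mpr ⟨hij.symm, hj⟩
      have cR : (symmDiff R A₀).card = m := by
        have h' := tog_card_mem (A := P) (B := A₀) hjP
        have hPR : symmDiff P {j} = R := by rw [hR, hP]
        rw [hPR] at h'
        omega
      have cQ : (symmDiff Q A₀).card = m + 1 := by
        have h' := tog_card_mem (A := A) (B := A₀) hj
        rw [← hQ] at h'; omega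
      have dP := ih (m+1) (by omega) P cP
      have dQ := ih (m+1) (by omega) Q cQ
      have dR := ih m (by omega) R cR
      -- square: R - P - A - Q - R
      have aRP : G.Adj (cs.φ R) (cs.φ P) := by
        have h' : P = symmDiff R {j} := by rw [hR, tog_tog, hP]
        rw [h']; exact cs_adj cs R j
      have aPA : G.Adj (cs.φ P) (cs.φ A) := by
        have h' : A = symmDiff P {i} := by rw [hP, tog_tog]
        have h2' := cs_adj cs P i
        rw [← h'] at h2'
        exact h2'
      have aAQ : G.Adj (cs.φ A) (cs.φ Q) := cs_adj cs A j
      have aQR : G.Adj (cs.φ Q) (cs.φ R) := by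
        have h' : R = symmDiff Q {i} := by
          rw [hR, hQ, symmDiff_assoc, symmDiff_comm ({i} : Finset (Fin k)),
            ← symmDiff_assoc]
        rw [h']; exact cs_adj cs Q i
      have hRA : cs.φ R ≠ cs.φ A := by
        intro h
        have h' := cs.inj h
        rw [h'] at cR
        omega
      have hPQ : cs.φ P ≠ cs.φ Q := by
        intro h
        have h' := cs.inj h
        have h2' : i ∈ P ↔ i ∈ Q := by rw [h']
        simp only [hP, hQ, Finset.mem_symmDiff, Finset.mem_singleton] at h2'
        tauto
      have hfin := square_grade hmed v₀ aRP aPA aAQ aQR hRA hPQ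
        (by omega) (by omega)
      omega
end Part6

section Part6b
variable {G : SimpleGraph V} {S : Set V} {k : ℕ}

lemma tog_comm {k : ℕ} (A : Finset (Fin k)) (i j : Fin k) :
    symmDiff (symmDiff A {i}) {j} = symmDiff (symmDiff A {j}) {i} := by
  rw [symmDiff_assoc, symmDiff_comm ({i} : Finset (Fin k)), ← symmDiff_assoc]

lemma tog_ne {k : ℕ} (A : Finset (Fin k)) (i : Fin k) : symmDiff A {i} ≠ A := by
  intro h
  have : i ∈ symmDiff A {i} ↔ i ∈ A := by rw [h]
  simp [Finset.mem_symmDiff] at this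

lemma tog_ne_tog {k : ℕ} (A : Finset (Fin k)) {i j : Fin k} (hij : i ≠ j) :
    symmDiff A {i} ≠ symmDiff A {j} := by
  intro h
  have h2 : ({i} : Finset (Fin k)) = {j} := by
    have e1 : symmDiff A (symmDiff A {i}) = {i} := symmDiff_symmDiff_cancel_left ..
    have e2 : symmDiff A (symmDiff A {j}) = {j} := symmDiff_symmDiff_cancel_left ..
    rw [← e1, ← e2, h]
  exact hij (Finset.singleton_injective h2)

lemma tog2_ne {k : ℕ} (A : Finset (Fin k)) {i j : Fin k} (hij : i ≠ j) :
    A ≠ symmDiff (symmDiff A {j}) {i} := by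
  intro h
  have : j ∈ A ↔ j ∈ symmDiff (symmDiff A {j}) {i} := by rw [← h]
  simp only [Finset.mem_symmDiff, Finset.mem_singleton] at this
  tauto

/-- the i-direction edge of the cube at corner A -/
def iEdge (cs : CubeSetup G S k) (i : Fin k) (A : Finset (Fin k)) : Sym2 V :=
  s(cs.φ A, cs.φ (symmDiff A {i}))

lemma iEdge_mem_edgeSet (cs : CubeSetup G S k) (i : Fin k) (A : Finset (Fin k)) :
    iEdge cs i A ∈ G.edgeSet := G.mem_edgeSet.mpr (cs_adj cs A i)

variable (hmed : MedianGraph G)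

include hmed in
lemma iEdge_theta (cs : CubeSetup G S k) (i : Fin k) :
    ∀ n (A B : Finset (Fin k)), (symmDiff A B).card = n →
      Theta G (iEdge cs i A) (iEdge cs i B) := by
  intro n
  induction n using Nat.strong_induction_on with
  | _ n ih =>
    intro A B hAB
    by_cases h0 : n = 0
    · rw [h0] at hAB
      rw [symmDiff_card_zero hAB]
      exact theta_refl (iEdge_mem_edgeSet cs i B)
    have hne : (symmDiff A B).Nonempty := by
      rw [← Finset.card_pos]; omega
    obtain ⟨j, hj⟩ := hne
    by_cases hji : j = i
    · -- toggle i : same edge (swapped)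
      subst hji
      have heq : iEdge cs j A = iEdge cs j (symmDiff A {j}) := by
        unfold iEdge
        rw [tog_tog, Sym2.eq_swap]
      rw [heq]
      exact ih ((symmDiff (symmDiff A {j}) B).card)
        (by have := tog_card_mem (A := A) (B := B) hj; omega)
        (symmDiff A {j}) B rfl
    · -- toggle j ≠ i : square step
      have hsq : IsSquare G (cs.φ A) (cs.φ (symmDiff A {i}))
          (cs.φ (symmDiff A {j})) (cs.φ (symmDiff (symmDiff A {j}) {i})) := by
        refine ⟨cs_adj cs A i, cs_adj cs (symmDiff A {j}) i, cs_adj cs A j, ?_, ?_, ?_⟩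
        · have h' : symmDiff (symmDiff A {j}) {i} = symmDiff (symmDiff A {i}) {j} :=
            tog_comm ..
          rw [h']; exact cs_adj cs (symmDiff A {i}) j
        · exact fun h => tog2_ne A (fun hh => hji hh.symm) (cs.inj h)
        · exact fun h => tog_ne_tog A (fun hh => hji hh.symm) (cs.inj h)
      have hstep : Theta0 G (iEdge cs i A) (iEdge cs i (symmDiff A {j})) :=
        ⟨_, _, _, _, hsq, rfl, rfl⟩
      have hrest : Theta G (iEdge cs i (symmDiff A {j})) (iEdge cs i B) :=
        ih ((symmDiff (symmDiff A {j}) B).card)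
          (by have := tog_card_mem (A := A) (B := B) hj; omega)
          (symmDiff A {j}) B rfl
      exact theta_trans (theta_tail (theta_refl (iEdge_mem_edgeSet cs i A)) hstep) hrest

/-- the Θ-class of the i-th direction -/
def dirCl (cs : CubeSetup G S k) (i : Fin k) : Set (Sym2 V) :=
  {f | Theta G (iEdge cs i ∅) f}

lemma dirCl_thetaClass (cs : CubeSetup G S k) (i : Fin k) : ThetaClass G (dirCl cs i) :=
  ⟨iEdge cs i ∅, iEdge_mem_edgeSet cs i ∅, rfl⟩

include hmed in
lemma iEdge_mem_dirCl (cs : CubeSetup G S k) (i : Fin k) (A : Finset (Fin k)) :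
    iEdge cs i A ∈ dirCl cs i :=
  iEdge_theta hmed cs i _ ∅ A rfl

include hmed in
lemma dir_split (cs : CubeSetup G S k) (i : Fin k) (A : Finset (Fin k)) :
    ¬ SameSide G (dirCl cs i) (cs.φ A) (cs.φ (symmDiff A {i})) :=
  edge_split (cs_adj cs A i) (iEdge_mem_dirCl hmed cs i A)

include hmed in
lemma dir_same_tog (cs : CubeSetup G S k) {i j : Fin k} (hij : j ≠ i) (A : Finset (Fin k)) :
    SameSide G (dirCl cs i) (cs.φ A) (cs.φ (symmDiff A {j})) := by
  by_contra h
  have hfs := far_step hmed (dirCl_thetaClass cs i) (cs_adj cs A i)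
    (iEdge_mem_dirCl hmed cs i A) h
  have h1 : G.dist (cs.φ A) (cs.φ (symmDiff A {j})) = 1 := adj_dist1 (cs_adj cs A j)
  have h2 : cs.φ (symmDiff A {i}) = cs.φ (symmDiff A {j}) :=
    dist0 hmed (by omega)
  exact tog_ne_tog A (fun hh => hij hh.symm) (cs.inj h2)

include hmed in
lemma dir_same (cs : CubeSetup G S k) (i : Fin k) :
    ∀ n (A B : Finset (Fin k)), (symmDiff A B).card = n → i ∉ symmDiff A B →
      SameSide G (dirCl cs i) (cs.φ A) (cs.φ B) := by
  intro n
  induction n using Nat.strong_induction_on with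
  | _ n ih =>
    intro A B hAB hi
    by_cases h0 : n = 0
    · rw [h0] at hAB
      rw [symmDiff_card_zero hAB]
      exact sameSide_refl _
    have hne : (symmDiff A B).Nonempty := by rw [← Finset.card_pos]; omega
    obtain ⟨j, hj⟩ := hne
    have hji : j ≠ i := fun h => hi (h ▸ hj)
    have h1 : SameSide G (dirCl cs i) (cs.φ A) (cs.φ (symmDiff A {j})) :=
      dir_same_tog hmed cs hji A
    have h2 : i ∉ symmDiff (symmDiff A {j}) B := by
      rw [tog_mem hj]
      intro h
      exact hi (Finset.mem_of_mem_erase h)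
    have h3 := ih ((symmDiff (symmDiff A {j}) B).card)
      (by have := tog_card_mem (A := A) (B := B) hj; omega)
      (symmDiff A {j}) B rfl h2
    exact sameSide_trans h1 h3

include hmed in
lemma dir_split_mem (cs : CubeSetup G S k) {i : Fin k} {A B : Finset (Fin k)}
    (hi : i ∈ symmDiff A B) :
    ¬ SameSide G (dirCl cs i) (cs.φ A) (cs.φ B) := by
  intro h
  have h2 : i ∉ symmDiff (symmDiff A {i}) B := by
    rw [tog_mem hi]; simp
  have h3 : SameSide G (dirCl cs i) (cs.φ (symmDiff A {i})) (cs.φ B) :=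
    dir_same hmed cs i _ (symmDiff A {i}) B rfl h2
  exact dir_split hmed cs i A (sameSide_trans h (sameSide_symm h3))

include hmed in
lemma dirCl_injective (cs : CubeSetup G S k) {i j : Fin k} (h : dirCl cs i = dirCl cs j) :
    i = j := by
  by_contra hij
  have h1 : iEdge cs j ∅ ∈ dirCl cs i := by rw [h]; exact iEdge_mem_dirCl hmed cs j ∅
  have h2 := edge_split (cs_adj cs ∅ j) h1
  exact h2 (dir_same_tog hmed cs (fun hh => hij hh.symm) ∅)

include hmed in
/-- the Θ-classes having an edge in the cube are exactly the direction classes -/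
lemma cubeClasses_eq_dir (cs : CubeSetup G S k) :
    cubeClasses G S = {C | ∃ i : Fin k, C = dirCl cs i} := by
  ext C
  constructor
  · rintro ⟨hC, x, hx, y, hy, hadj, hmem⟩
    obtain ⟨A, rfl⟩ := cs.surj x hx
    obtain ⟨B, rfl⟩ := cs.surj y hy
    obtain ⟨i, rfl⟩ := cube_adj_toggle ((cs.adj A B).mpr hadj)
    exact ⟨i, class_unique hC (dirCl_thetaClass cs i) hmem (iEdge_mem_dirCl hmed cs i A)⟩
  · rintro ⟨i, rfl⟩
    exact ⟨dirCl_thetaClass cs i, cs.φ ∅, cs.memS ∅, cs.φ (symmDiff ∅ {i}),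
      cs.memS _, cs_adj cs ∅ i, iEdge_mem_dirCl hmed cs i ∅⟩

include hmed in
/-- which classes split two corners -/
lemma corner_split_iff (cs : CubeSetup G S k) {C : Set (Sym2 V)} (hC : ThetaClass G C)
    (A B : Finset (Fin k)) :
    ¬ SameSide G C (cs.φ A) (cs.φ B) ↔ ∃ i ∈ symmDiff A B, C = dirCl cs i := by
  constructor
  · intro h
    by_contra hh
    push_neg at hh
    apply h
    clear h
    -- walk over the toggles
    have : ∀ n (A' : Finset (Fin k)), (symmDiff A' B).card = n →
        (∀ i ∈ symmDiff A' B, C ≠ dirCl cs i) →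
        SameSide G C (cs.φ A') (cs.φ B) := by
      intro n
      induction n using Nat.strong_induction_on with
      | _ n ih =>
        intro A' hc hno
        by_cases h0 : n = 0
        · rw [h0] at hc
          rw [symmDiff_card_zero hc]
          exact sameSide_refl _
        have hne : (symmDiff A' B).Nonempty := by rw [← Finset.card_pos]; omega
        obtain ⟨j, hj⟩ := hne
        have hstep : SameSide G C (cs.φ A') (cs.φ (symmDiff A' {j})) := by
          by_contra hsp
          have := cross_mem hmed hC (cs_adj cs A' j) hsp
          exact hno j hj (class_unique hC (dirCl_thetaClass cs j) this
            (iEdge_mem_dirCl hmed cs j A'))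
        have hrest := ih ((symmDiff (symmDiff A' {j}) B).card)
          (by have := tog_card_mem (A := A') (B := B) hj; omega)
          (symmDiff A' {j}) rfl
          (by
            intro i hi
            refine hno i ?_
            rw [tog_mem hj] at hi
            exact Finset.mem_of_mem_erase hi)
        exact sameSide_trans hstep hrest
    refine this _ A rfl ?_
    intro i hi h'
    exact hh i hi h'
  · rintro ⟨i, hi, rfl⟩
    exact dir_split_mem hmed cs hi

end Part6b

section Part6c
variable {G : SimpleGraph V} {S : Set V} {k : ℕ} (hmed : MedianGraph G)

include hmed in
lemma basis_grade (cs : CubeSetup G S k) {v₀ : V} {A₀ : Finset (Fin k)}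
    (hb : IsBasis G v₀ S (cs.φ A₀)) (A : Finset (Fin k)) :
    G.dist v₀ (cs.φ A) = G.dist v₀ (cs.φ A₀) + (symmDiff A A₀).card :=
  cube_grade hmed cs (fun i => hb.2 _ (cs.memS _) (cs_adj cs A₀ i)) _ A rfl

include hmed in
lemma anti_corner (cs : CubeSetup G S k) {v₀ : V} {A₀ A₁ : Finset (Fin k)}
    (hb : IsBasis G v₀ S (cs.φ A₀)) (ha : IsAntiBasis G v₀ S (cs.φ A₁)) :
    symmDiff A₁ A₀ = Finset.univ := by
  rw [Finset.eq_univ_iff_forall]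
  by_contra h
  push_neg at h
  obtain ⟨i, hi⟩ := h
  have h1 := ha.2 _ (cs.memS (symmDiff A₁ {i})) (cs_adj cs A₁ i)
  have g1 := basis_grade hmed cs hb A₁
  have g2 := basis_grade hmed cs hb (symmDiff A₁ {i})
  have h2 := tog_card_not_mem (A := A₁) (B := A₀) hi
  omega

include hmed in
/-- the classes splitting basis from antibasis are exactly the cube classes -/
lemma basis_anti_split (cs : CubeSetup G S k) {v₀ : V} {A₀ A₁ : Finset (Fin k)}
    (hb : IsBasis G v₀ S (cs.φ A₀)) (ha : IsAntiBasis G v₀ S (cs.φ A₁))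
    {C : Set (Sym2 V)} (hC : ThetaClass G C) :
    ¬ SameSide G C (cs.φ A₀) (cs.φ A₁) ↔ C ∈ cubeClasses G S := by
  rw [corner_split_iff hmed cs hC, cubeClasses_eq_dir hmed cs]
  have huniv : symmDiff A₀ A₁ = Finset.univ := by
    rw [symmDiff_comm]; exact anti_corner hmed cs hb ha
  constructor
  · rintro ⟨i, _, rfl⟩; exact ⟨i, rfl⟩
  · rintro ⟨i, rfl⟩
    exact ⟨i, by rw [huniv]; exact Finset.mem_univ i, rfl⟩

include hmed in
lemma cube_no_classes (cs : CubeSetup G S k) (h : cubeClasses G S = ∅) :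
    ∀ x ∈ S, ∀ y ∈ S, x = y := by
  have hk : k = 0 := by
    by_contra h0
    have i₀ : Fin k := ⟨0, Nat.pos_of_ne_zero h0⟩
    have hmem : dirCl cs i₀ ∈ cubeClasses G S := by
      rw [cubeClasses_eq_dir hmed cs]; exact ⟨i₀, rfl⟩
    rw [h] at hmem
    exact hmem
  subst hk
  intro x hx y hy
  obtain ⟨A, rfl⟩ := cs.surj x hx
  obtain ⟨B, rfl⟩ := cs.surj y hy
  congr 1
  ext j
  exact Fin.elim0 j

include hmed in
lemma eq_of_all_sameSide {b b' : V}
    (h : ∀ C : Set (Sym2 V), ThetaClass G C → SameSide G C b b') : b = b' := by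
  by_contra hne
  obtain ⟨z₁, hz1, hd1⟩ := exists_step hmed hne
  set C₀ : Set (Sym2 V) := {f | Theta G s(b,z₁) f} with hC₀
  have hC : ThetaClass G C₀ := classOf_thetaClass (G.mem_edgeSet.mpr hz1)
  have hsplit : ¬ SameSide G C₀ b z₁ :=
    edge_split hz1 (mem_classOf_self (G.mem_edgeSet.mpr hz1))
  have hint : z₁ ∈ interval G b b' := mem_interval' (by rw [adj_dist1 hz1]; omega)
  rcases interval_split hmed hC hint with hs | hs
  · exact hsplit hs
  · exact hsplit (sameSide_trans (h C₀ hC) (sameSide_symm hs))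

include hmed in
/-- determinism: same basis and same class set force the same anti-basis -/
lemma anti_det {S' S'' : Set V} {x b b' : V} {v₀ : V}
    (h1 : IsInducedCube G S') (h2 : IsInducedCube G S'')
    (hb1 : IsBasis G v₀ S' x) (hb2 : IsBasis G v₀ S'' x)
    (ha1 : IsAntiBasis G v₀ S' b) (ha2 : IsAntiBasis G v₀ S'' b')
    (hcc : cubeClasses G S' = cubeClasses G S'') : b = b' := by
  obtain ⟨k', hk'⟩ := h1
  obtain ⟨k'', hk''⟩ := h2
  obtain ⟨cs'⟩ := cube_setup hk'
  obtain ⟨cs''⟩ := cube_setup hk''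
  obtain ⟨A₀, hA₀⟩ := cs'.surj x hb1.1
  obtain ⟨A₁, hA₁⟩ := cs'.surj b ha1.1
  obtain ⟨B₀, hB₀⟩ := cs''.surj x hb2.1
  obtain ⟨B₁, hB₁⟩ := cs''.surj b' ha2.1
  refine eq_of_all_sameSide hmed (fun C hC => ?_)
  have e1 := basis_anti_split hmed cs' (hA₀ ▸ hb1) (hA₁ ▸ ha1) hC
  have e2 := basis_anti_split hmed cs'' (hB₀ ▸ hb2) (hB₁ ▸ ha2) hC
  rw [hA₀, hA₁] at e1
  rw [hB₀, hB₁] at e2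
  rw [hcc] at e1
  by_cases hx1 : SameSide G C x b
  · have hx2 : SameSide G C x b' := by
      by_contra hx2
      exact (e1.mpr (e2.mp hx2)) hx1
    exact sameSide_trans (sameSide_symm hx1) hx2
  · have hx2 : ¬ SameSide G C x b' := fun hs => (e2.mpr (e1.mp hx1)) hs
    exact two_sided hmed hC (fun hs => hx1 (sameSide_symm hs)) hx2

end Part6c

section Part7
variable {V : Type*} [Fintype V] {G : SimpleGraph V} (hmed : MedianGraph G)

/-- the set of Θ-classes separating two vertices (as sides) -/
def sigS (G : SimpleGraph V) (z w : V) : Set (Set (Sym2 V)) :=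
  {C | ThetaClass G C ∧ ¬ SameSide G C z w}

include hmed in
lemma signature_iff {C : Set (Sym2 V)} {z w : V} :
    C ∈ signature G z w ↔ C ∈ sigS G z w := by
  unfold signature sigS
  simp only [Set.mem_setOf_eq]
  constructor
  · rintro ⟨h1, h2⟩; exact ⟨h1, (sep_iff hmed h1 z w).mp h2⟩
  · rintro ⟨h1, h2⟩; exact ⟨h1, (sep_iff hmed h1 z w).mpr h2⟩

include hmed in
lemma ladder_iff {C : Set (Sym2 V)} {x t : V} :
    C ∈ ladder G x t ↔ (ThetaClass G C ∧ ¬ SameSide G C x t ∧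
      ∃ z, G.Adj x z ∧ s(x,z) ∈ C) := by
  unfold ladder
  simp only [Set.mem_setOf_eq]
  rw [signature_iff hmed]
  unfold sigS
  simp only [Set.mem_setOf_eq]
  tauto

include hmed in
lemma sigS_edge {x z₁ : V} (h : G.Adj x z₁) :
    sigS G x z₁ = {{f | Theta G s(x,z₁) f}} := by
  ext C
  simp only [sigS, Set.mem_setOf_eq, Set.mem_singleton_iff]
  constructor
  · rintro ⟨hC, hsplit⟩
    have := cross_mem hmed hC h hsplit
    exact class_eq_classOf hC this
  · rintro rfl
    refine ⟨classOf_thetaClass (G.mem_edgeSet.mpr h), ?_⟩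
    exact edge_split h (mem_classOf_self (G.mem_edgeSet.mpr h))

include hmed in
lemma sigS_step {z w z₁ : V} (hadj : G.Adj z z₁) (hint : z₁ ∈ interval G z w) :
    sigS G z w = insert {f | Theta G s(z,z₁) f} (sigS G z₁ w) ∧
    {f | Theta G s(z,z₁) f} ∉ sigS G z₁ w := by
  have hC₀ : ThetaClass G {f | Theta G s(z,z₁) f} :=
    classOf_thetaClass (G.mem_edgeSet.mpr hadj)
  have hsplit : ¬ SameSide G {f | Theta G s(z,z₁) f} z z₁ :=
    edge_split hadj (mem_classOf_self (G.mem_edgeSet.mpr hadj))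
  have hsame1 : SameSide G {f | Theta G s(z,z₁) f} z₁ w := by
    rcases interval_split hmed hC₀ hint with hs | hs
    · exact absurd hs hsplit
    · exact hs
  constructor
  · ext C
    simp only [sigS, Set.mem_setOf_eq, Set.mem_insert_iff]
    constructor
    · rintro ⟨hC, hs⟩
      by_cases hzz : SameSide G C z z₁
      · refine Or.inr ⟨hC, fun hw => hs (sameSide_trans hzz hw)⟩
      · exact Or.inl (class_eq_classOf hC (cross_mem hmed hC hadj hzz))
    · rintro (rfl | ⟨hC, hs⟩)
      · exact ⟨hC₀, fun hs => hsplit (sameSide_trans hs (sameSide_symm hsame1))⟩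
      · refine ⟨hC, fun hw => ?_⟩
        have hzz : SameSide G C z z₁ := by
          by_contra hzz
          have := cross_mem hmed hC hadj hzz
          have heq := class_eq_classOf hC this
          rw [heq] at hs
          exact hs hsame1
        exact hs (sameSide_trans (sameSide_symm hzz) hw)
  · rintro ⟨_, hs⟩
    exact hs hsame1

include hmed in
lemma sigS_card : ∀ n (z w : V), G.dist z w = n → (sigS G z w).ncard = n := by
  intro n
  induction n using Nat.strong_induction_on with
  | _ n ih =>
    intro z w hd
    by_cases hzw : z = w
    · subst hzw
      have he : sigS G z z = ∅ :=
        Set.eq_empty_iff_forall_notMem.mpr (fun C hC => hC.2 (sameSide_refl z))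
      rw [he, Set.ncard_empty]
      rw [SimpleGraph.dist_self] at hd
      omega
    · obtain ⟨z₁, hz1, hd1⟩ := exists_step hmed hzw
      have hint : z₁ ∈ interval G z w := mem_interval' (by rw [adj_dist1 hz1]; omega)
      obtain ⟨h1, h2⟩ := sigS_step hmed hz1 hint
      rw [h1, Set.ncard_insert_of_notMem h2]
      have h0 : G.dist z w ≠ 0 := fun h => hzw (dist0 hmed h)
      have := ih (G.dist z₁ w) (by omega) z₁ w rfl
      omega
end Part7

section Part7b
variable {V : Type*} [Fintype V] {G : SimpleGraph V} (hmed : MedianGraph G)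

lemma split_of_same_split {C : Set (Sym2 V)} {a b c : V} (h1 : SameSide G C a b)
    (h2 : ¬ SameSide G C b c) : ¬ SameSide G C a c :=
  fun h3 => h2 (sameSide_trans (sameSide_symm h1) h3)

include hmed in
lemma sigS_union {z w t : V} (hdisj : ∀ C, C ∈ sigS G z t → C ∉ sigS G t w) :
    sigS G z w = sigS G z t ∪ sigS G t w := by
  ext C
  simp only [sigS, Set.mem_setOf_eq, Set.mem_union]
  constructor
  · rintro ⟨hC, hs⟩
    by_cases h1 : SameSide G C z t
    · exact Or.inr ⟨hC, fun h3 => hs (sameSide_trans h1 h3)⟩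
    · exact Or.inl ⟨hC, h1⟩
  · rintro (⟨hC, hs⟩ | ⟨hC, hs⟩)
    · refine ⟨hC, fun hzw => ?_⟩
      have h2 : C ∉ sigS G t w := hdisj C ⟨hC, hs⟩
      simp only [sigS, Set.mem_setOf_eq, not_and, not_not] at h2
      exact hs (sameSide_trans hzw (sameSide_symm (h2 hC)))
    · refine ⟨hC, fun hzw => ?_⟩
      by_cases h1 : SameSide G C z t
      · exact hs (sameSide_trans (sameSide_symm h1) hzw)
      · exact (hdisj C ⟨hC, h1⟩) ⟨hC, hs⟩

include hmed in
lemma interval_of_disjoint {z w t : V} (hdisj : ∀ C, C ∈ sigS G z t → C ∉ sigS G t w) :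
    t ∈ interval G z w := by
  have hu := sigS_union hmed hdisj
  have hd : Disjoint (sigS G z t) (sigS G t w) :=
    Set.disjoint_left.mpr hdisj
  have hc : (sigS G z w).ncard = (sigS G z t).ncard + (sigS G t w).ncard := by
    rw [hu]
    exact Set.ncard_union_eq hd (Set.toFinite _) (Set.toFinite _)
  have e1 := sigS_card hmed (G.dist z w) z w rfl
  have e2 := sigS_card hmed (G.dist z t) z t rfl
  have e3 := sigS_card hmed (G.dist t w) t w rfl
  exact mem_interval' (by omega)

include hmed in
lemma nm_split {v₀ t x b : V} (h : NextMilestone G v₀ t x b) :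
    ∀ C : Set (Sym2 V), ThetaClass G C →
      (¬ SameSide G C x b ↔ C ∈ ladder G x t) := by
  obtain ⟨S', ⟨k, hk⟩, hb, ha, hcl⟩ := h
  obtain ⟨cs⟩ := cube_setup hk
  obtain ⟨A₀, hA₀⟩ := cs.surj x hb.1
  obtain ⟨A₁, hA₁⟩ := cs.surj b ha.1
  intro C hC
  have := basis_anti_split hmed cs (hA₀ ▸ hb) (hA₁ ▸ ha) hC
  rw [hA₀, hA₁, hcl] at this
  exact this

include hmed in
lemma nm_det {v₀ t x b b' : V} (h : NextMilestone G v₀ t x b)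
    (h' : NextMilestone G v₀ t x b') : b = b' := by
  obtain ⟨S', hc1, hb1, ha1, hcl1⟩ := h
  obtain ⟨S'', hc2, hb2, ha2, hcl2⟩ := h'
  exact anti_det hmed hc1 hc2 hb1 hb2 ha1 ha2 (by rw [hcl1, hcl2])

lemma ladder_self (t : V) : ladder G t t = ∅ := by
  apply Set.eq_empty_iff_forall_notMem.mpr
  rintro C ⟨⟨hC, hsep⟩, _⟩
  exact hsep (SimpleGraph.Reachable.refl t)

include hmed in
lemma nm_of_t {v₀ t b : V} (h : NextMilestone G v₀ t t b) : b = t := by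
  obtain ⟨S', ⟨k, hk⟩, hb, ha, hcl⟩ := h
  rw [ladder_self] at hcl
  obtain ⟨cs⟩ := cube_setup hk
  exact cube_no_classes hmed cs hcl b ha.1 t hb.1

include hmed in
lemma nm_same_of_not_ladder {v₀ t x b : V} (h : NextMilestone G v₀ t x b)
    {C : Set (Sym2 V)} (hC : ThetaClass G C) (hnl : C ∉ ladder G x t) :
    SameSide G C x b := by
  by_contra hs
  exact hnl ((nm_split hmed h C hC).mp hs)

include hmed in
lemma nm_interval {v₀ t x b : V} (h : NextMilestone G v₀ t x b) :
    b ∈ interval G x t := by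
  refine interval_of_disjoint hmed (fun C hC1 hC2 => ?_)
  obtain ⟨hC, hs⟩ := hC1
  obtain ⟨_, hs2⟩ := hC2
  have hl := (nm_split hmed h C hC).mp hs
  have hxt : ¬ SameSide G C x t := ((ladder_iff hmed).mp hl).2.1
  exact hs2 (two_sided hmed hC (fun hh => hs (sameSide_symm hh)) hxt)

include hmed in
lemma ms_self {v₀ t x : V} (h : x ∈ MilestoneSet G v₀ t t) : x = t := by
  induction h with
  | refl => rfl
  | tail h1 h2 ih =>
    subst ih
    exact nm_of_t hmed h2

lemma chain_linear {α : Type*} {R : α → α → Prop}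
    (hdet : ∀ x y y', R x y → R x y' → y = y') {u a b : α}
    (ha : Relation.ReflTransGen R u a) (hb : Relation.ReflTransGen R u b) :
    Relation.ReflTransGen R a b ∨ Relation.ReflTransGen R b a := by
  induction hb with
  | refl => exact Or.inr ha
  | tail h1 h2 ih =>
    rename_i c b'
    rcases ih with h | h
    · exact Or.inl (h.tail h2)
    · rcases Relation.ReflTransGen.cases_head h with rfl | ⟨d, hd1, hd2⟩
      · exact Or.inl (Relation.ReflTransGen.single h2)
      · rw [hdet c d b' hd1 h2] at hd2
        exact Or.inr hd2

end Part7b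

section Part7c
variable {V : Type*} [Fintype V] {G : SimpleGraph V} (hmed : MedianGraph G)

lemma orth_symm {C D : Set (Sym2 V)} (h : Orthogonal G C D) : Orthogonal G D C := by
  obtain ⟨u, v, x, y, ⟨h1, h2, h3, h4, h5, h6⟩, m1, m2, m3, m4⟩ := h
  exact ⟨u, x, v, y, ⟨h3, h4, h1, h2, h5, fun hh => h6 hh.symm⟩, m3, m4, m1, m2⟩

include hmed in
/-- a class orthogonal to E has an edge on each side of E -/
lemma orth_quadrant {C E : Set (Sym2 V)} (hC : ThetaClass G C) (hE : ThetaClass G E)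
    (hne : C ≠ E) (h : Orthogonal G C E) :
    ∃ a b a₂ b₂ : V, G.Adj a b ∧ G.Adj a₂ b₂ ∧ s(a,b) ∈ C ∧ s(a₂,b₂) ∈ C ∧
      ¬ SameSide G E a a₂ ∧ SameSide G E a b ∧ SameSide G E a₂ b₂ := by
  obtain ⟨u, v, x, y, ⟨h1, h2, h3, h4, h5, h6⟩, m1, m2, m3, m4⟩ := h
  have huv : SameSide G E u v := by
    by_contra hh
    exact hne (class_unique hC hE m1 (cross_mem hmed hE h1 hh))
  have hxy : SameSide G E x y := by
    by_contra hh
    exact hne (class_unique hC hE m2 (cross_mem hmed hE h2 hh))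
  exact ⟨u, v, x, y, h1, h2, m1, m2, edge_split h3 m3, huv, hxy⟩

include hmed in
/-- two distinct classes with edges at q, both separating q from t, are orthogonal -/
lemma pair_orth {C D : Set (Sym2 V)} (hC : ThetaClass G C) (hD : ThetaClass G D)
    (hne : C ≠ D) {q c₁ d₁ t : V}
    (hc : G.Adj q c₁) (hmc : s(q,c₁) ∈ C) (hd : G.Adj q d₁) (hmd : s(q,d₁) ∈ D)
    (hct : ¬ SameSide G C q t) (hdt : ¬ SameSide G D q t) :
    Orthogonal G C D := by
  have e1 : G.dist c₁ t + 1 = G.dist q t := far_step hmed hC hc hmc hct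
  have e2 : G.dist d₁ t + 1 = G.dist q t := far_step hmed hD hd hmd hdt
  have hcd : c₁ ≠ d₁ := by
    intro hh
    subst hh
    exact hne (class_unique hC hD hmc hmd)
  obtain ⟨m, hm1, hm2, hm3, hm4⟩ := square_complete hmed hc hd hcd e1 e2
  have sq1 : IsSquare G q c₁ d₁ m :=
    ⟨hc, hm2, hd, hm1, fun hh => hm4 hh.symm, hcd⟩
  have sq2 : IsSquare G q d₁ c₁ m :=
    ⟨hd, hm1, hc, hm2, fun hh => hm4 hh.symm, fun hh => hcd hh.symm⟩
  have mc2 : s(d₁,m) ∈ C := class_closed hC hmc ⟨q, c₁, d₁, m, sq1, rfl, rfl⟩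
  have md2 : s(c₁,m) ∈ D := class_closed hD hmd ⟨q, d₁, c₁, m, sq2, rfl, rfl⟩
  exact ⟨q, c₁, d₁, m, sq1, hmc, mc2, hmd, md2⟩

include hmed in
/-- near-side boundary of a class is convex -/
lemma boundary_convex {C : Set (Sym2 V)} (hC : ThetaClass G C) (v : V)
    {f f' m : V}
    (hf : SameSide G C f v ∧ ∃ c, G.Adj f c ∧ s(f,c) ∈ C)
    (hf' : SameSide G C f' v ∧ ∃ c, G.Adj f' c ∧ s(f',c) ∈ C)
    (hm : m ∈ interval G f f') :
    SameSide G C m v ∧ ∃ c, G.Adj m c ∧ s(m,c) ∈ C := by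
  obtain ⟨hfv, cf, hcf, hmcf⟩ := hf
  obtain ⟨hfv', z', hz', hmz'⟩ := hf'
  have hff' : SameSide G C f f' := sameSide_trans hfv (sameSide_symm hfv')
  have hfm : SameSide G C f m :=
    interval_side hmed hC (G.dist f m) f f' m rfl hff' hm
  have hmv : SameSide G C m v := sameSide_trans (sameSide_symm hfm) hfv
  have hsplit : ¬ SameSide G C f' z' := edge_split hz' hmz'
  have hfz' : ¬ SameSide G C f z' := split_of_same_split hff' hsplit
  -- d(f,z') = d(f,f') + 1
  have hstep := adj_step hmed f hz'
  have hd : G.dist f z' = G.dist f f' + 1 := by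
    rcases hstep with h | h
    · omega
    · exfalso
      have hint : z' ∈ interval G f f' := mem_interval' (by
        have : G.dist z' f' = 1 := adj_dist1 hz'.symm
        omega)
      rcases interval_split hmed hC hint with hs | hs
      · exact hfz' hs
      · exact hsplit (sameSide_symm hs)
  have hmi : m ∈ interval G f z' := mem_interval' (by
    have h1 := mem_interval hm
    have h2 : G.dist m z' ≤ G.dist m f' + G.dist f' z' := tri hmed ..
    have h3 : G.dist f z' ≤ G.dist f m + G.dist m z' := tri hmed ..
    have h4 : G.dist f' z' = 1 := adj_dist1 hz'
    omega)
  refine ⟨hmv, ?_⟩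
  exact prop_along hmed hC (G.dist f m) f m z' cf rfl hcf hmcf hfz' hmi hfm

end Part7c

section Part8
variable {V : Type*} [Fintype V] {G : SimpleGraph V} (hmed : MedianGraph G)
variable {v₀ u v : V} {L : Set (Set (Sym2 V))} {S : Set V} {w p : V}

include hmed in
lemma fact_near_v0 (hL : OutgoingPOF G v₀ v L) {C : Set (Sym2 V)} (hCL : C ∈ L) :
    SameSide G C v₀ v := by
  obtain ⟨z, hadj, hdist, hmem⟩ := hL.2 C hCL
  refine (side_anchor hmed (hL.1.1 C hCL) hadj hmem v₀ v).mpr ?_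
  have h1 : G.dist v v = 0 := SimpleGraph.dist_self ..
  have h2 : G.dist v z = 1 := adj_dist1 hadj
  constructor <;> intro <;> omega

include hmed in
lemma split_vw_iff (hS : IsInducedCube G S) (hbasis : IsBasis G v₀ S v)
    (hclasses : cubeClasses G S = L) (hanti : IsAntiBasis G v₀ S w)
    {C : Set (Sym2 V)} (hC : ThetaClass G C) :
    ¬ SameSide G C v w ↔ C ∈ L := by
  obtain ⟨k, hk⟩ := hS
  obtain ⟨cs⟩ := cube_setup hk
  obtain ⟨A₀, hA₀⟩ := cs.surj v hbasis.1
  obtain ⟨A₁, hA₁⟩ := cs.surj w hanti.1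
  have := basis_anti_split hmed cs (hA₀ ▸ hbasis) (hA₁ ▸ hanti) hC
  rw [hA₀, hA₁, hclasses] at this
  exact this

include hmed in
lemma fact_vw_ne (hS : IsInducedCube G S) (hbasis : IsBasis G v₀ S v)
    (hclasses : cubeClasses G S = L) (hanti : IsAntiBasis G v₀ S w)
    (hLne : L.Nonempty) (hL : OutgoingPOF G v₀ v L) : v ≠ w := by
  obtain ⟨C, hCL⟩ := hLne
  intro h
  have := (split_vw_iff hmed hS hbasis hclasses hanti (hL.1.1 C hCL)).mpr hCL
  rw [← h] at this
  exact this (sameSide_refl v)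

include hmed in
lemma fact_N (hS : IsInducedCube G S) (hbasis : IsBasis G v₀ S v)
    (hclasses : cubeClasses G S = L) (hanti : IsAntiBasis G v₀ S w)
    (hL : OutgoingPOF G v₀ v L) : NextMilestone G v₀ w v w := by
  refine ⟨S, hS, hbasis, hanti, ?_⟩
  rw [hclasses]
  ext C
  rw [ladder_iff hmed]
  constructor
  · intro hCL
    have hC := hL.1.1 C hCL
    obtain ⟨z, hadj, _, hmem⟩ := hL.2 C hCL
    exact ⟨hC, (split_vw_iff hmed hS hbasis hclasses hanti hC).mpr hCL,
      z, hadj, hmem⟩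
  · rintro ⟨hC, hsplit, _⟩
    exact (split_vw_iff hmed hS hbasis hclasses hanti hC).mp hsplit

include hmed in
lemma fact_uv_ne (hp : IsPenultimate G v₀ u v p) : u ≠ v := by
  intro h
  subst h
  exact hp.2.1 (ms_self hmed hp.1)

include hmed in
/-- all (u,v)-milestones are on the near side of every class of L -/
lemma chainv_same (hu : u ∈ interval G v₀ v) (hL : OutgoingPOF G v₀ v L)
    {C : Set (Sym2 V)} (hCL : C ∈ L) {x : V} (hx : x ∈ MilestoneSet G v₀ u v) :
    SameSide G C x v := by
  have hC := hL.1.1 C hCL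
  have hbase : SameSide G C u v := by
    rcases interval_split hmed hC hu with hs | hs
    · exact sameSide_trans (sameSide_symm hs) (fact_near_v0 hmed hL hCL)
    · exact hs
  induction hx with
  | refl => exact hbase
  | tail h1 h2 ih =>
    rename_i y x'
    have hyv : SameSide G C y v := ih
    have hsame : SameSide G C y x' := by
      refine nm_same_of_not_ladder hmed h2 hC (fun hlad => ?_)
      exact ((ladder_iff hmed).mp hlad).2.1 hyv
    exact sameSide_trans (sameSide_symm hsame) hyv

include hmed in
/-- vertices with a w-milestone chain to v are on the near side of classes of L -/
lemma wchain_same (hS : IsInducedCube G S) (hbasis : IsBasis G v₀ S v)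
    (hclasses : cubeClasses G S = L) (hanti : IsAntiBasis G v₀ S w)
    (hL : OutgoingPOF G v₀ v L)
    {C : Set (Sym2 V)} (hCL : C ∈ L) {x : V}
    (hx : Relation.ReflTransGen (fun a b => NextMilestone G v₀ w a b) x v) :
    SameSide G C x v := by
  have hC := hL.1.1 C hCL
  have hvw : ¬ SameSide G C v w :=
    (split_vw_iff hmed hS hbasis hclasses hanti hC).mpr hCL
  induction hx using Relation.ReflTransGen.head_induction_on with
  | refl => exact sameSide_refl v
  | head h1 h2 ih =>
    rename_i x' y
    have hyv : SameSide G C y v := ih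
    have hsame : SameSide G C x' y := by
      by_contra hsplit
      have hlad := (nm_split hmed h1 C hC).mp hsplit
      have hxw : ¬ SameSide G C x' w := ((ladder_iff hmed).mp hlad).2.1
      have hyw : ¬ SameSide G C y w := split_of_same_split hyv hvw
      exact hyw (two_sided hmed hC (fun hh => hsplit (sameSide_symm hh)) hxw)
    exact sameSide_trans hsame hyv

include hmed in
lemma wchain_noedge (hS : IsInducedCube G S) (hbasis : IsBasis G v₀ S v)
    (hclasses : cubeClasses G S = L) (hanti : IsAntiBasis G v₀ S w)
    (hL : OutgoingPOF G v₀ v L)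
    {C : Set (Sym2 V)} (hCL : C ∈ L) {x : V} (hxv : x ≠ v)
    (hx : Relation.ReflTransGen (fun a b => NextMilestone G v₀ w a b) x v) :
    ¬ ∃ c, G.Adj x c ∧ s(x,c) ∈ C := by
  rintro ⟨c, hadj, hmem⟩
  have hC := hL.1.1 C hCL
  rcases Relation.ReflTransGen.cases_head hx with h | ⟨y, h1, h2⟩
  · exact hxv h
  have hxvs : SameSide G C x v :=
    wchain_same hmed hS hbasis hclasses hanti hL hCL hx
  have hyvs : SameSide G C y v :=
    wchain_same hmed hS hbasis hclasses hanti hL hCL h2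
  have hvw : ¬ SameSide G C v w :=
    (split_vw_iff hmed hS hbasis hclasses hanti hC).mpr hCL
  have hlad : C ∈ ladder G x w := by
    rw [ladder_iff hmed]
    exact ⟨hC, split_of_same_split hxvs hvw, c, hadj, hmem⟩
  have hsplit : ¬ SameSide G C x y := (nm_split hmed h1 C hC).mpr hlad
  exact hsplit (sameSide_trans hxvs (sameSide_symm hyvs))

include hmed in
/-- if no class of L has an edge at x and x is on the near side,
then the ladders towards w and towards v agree at x -/
lemma ladder_eq (hS : IsInducedCube G S) (hbasis : IsBasis G v₀ S v)
    (hclasses : cubeClasses G S = L) (hanti : IsAntiBasis G v₀ S w)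
    {x : V}
    (hnoedge : ∀ C ∈ L, ¬ ∃ c, G.Adj x c ∧ s(x,c) ∈ C) :
    ladder G x w = ladder G x v := by
  ext C
  rw [ladder_iff hmed, ladder_iff hmed]
  constructor
  · rintro ⟨hC, hsplit, c, hadj, hmem⟩
    have hCL : C ∉ L := fun hCL => hnoedge C hCL ⟨c, hadj, hmem⟩
    have hvw : SameSide G C v w := by
      by_contra hh
      exact hCL ((split_vw_iff hmed hS hbasis hclasses hanti hC).mp hh)
    refine ⟨hC, fun hxv => hsplit (sameSide_trans hxv hvw), c, hadj, hmem⟩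
  · rintro ⟨hC, hsplit, c, hadj, hmem⟩
    have hCL : C ∉ L := fun hCL => hnoedge C hCL ⟨c, hadj, hmem⟩
    have hvw : SameSide G C v w := by
      by_contra hh
      exact hCL ((split_vw_iff hmed hS hbasis hclasses hanti hC).mp hh)
    refine ⟨hC, fun hxw => hsplit (sameSide_trans hxw (sameSide_symm hvw)), c, hadj, hmem⟩

lemma nm_transport {v₀ t t' x b : V} (h : NextMilestone G v₀ t x b)
    (heq : ladder G x t = ladder G x t') : NextMilestone G v₀ t' x b := by
  obtain ⟨S', hc, hb, ha, hcl⟩ := h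
  exact ⟨S', hc, hb, ha, hcl.trans heq⟩

include hmed in
lemma chain_interval {t : V} : ∀ {a b : V},
    Relation.ReflTransGen (fun x y => NextMilestone G v₀ t x y) a b →
    b ∈ interval G a t := by
  intro a b h
  induction h with
  | refl => exact mem_interval' (by simp)
  | tail h1 h2 ih =>
    rename_i c b'
    have h3 := mem_interval ih
    have h4 := mem_interval (nm_interval hmed h2)
    have h5 : G.dist a b' ≤ G.dist a c + G.dist c b' := tri hmed ..
    have h6 : G.dist a t ≤ G.dist a b' + G.dist b' t := tri hmed ..
    exact mem_interval' (by omega)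

end Part8

section Part8b
variable {V : Type*} [Fintype V] {G : SimpleGraph V} (hmed : MedianGraph G)
variable {v₀ u v : V} {L : Set (Set (Sym2 V))} {S : Set V} {w p : V}

include hmed in
lemma gate_argument (hL : OutgoingPOF G v₀ v L) {C : Set (Sym2 V)} (hCL : C ∈ L)
    (hnear : SameSide G C p v)
    (hnoedge : ¬ ∃ c, G.Adj p c ∧ s(p,c) ∈ C) :
    ¬ IsPOF G (ladder G p v ∪ {C}) := by
  intro hPOF
  have hC := hL.1.1 C hCL
  set F := {x | SameSide G C x v ∧ ∃ c, G.Adj x c ∧ s(x,c) ∈ C} with hF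
  have hvF : v ∈ F := by
    obtain ⟨z, hadj, _, hmem⟩ := hL.2 C hCL
    exact ⟨sameSide_refl v, z, hadj, hmem⟩
  have hconv : ∀ f ∈ F, ∀ f' ∈ F, ∀ m, m ∈ interval G f f' → m ∈ F :=
    fun f hf f' hf' m hm => boundary_convex hmed hC v hf hf' hm
  obtain ⟨g, hgF, hgate⟩ := exists_gate hmed hconv ⟨v, hvF⟩ p
  by_cases hgp : g = p
  · exact hnoedge (hgp ▸ hgF.2)
  obtain ⟨p₁, hp1, hd1⟩ := exists_step hmed (fun h => hgp h.symm)
  set E := {f | Theta G s(p,p₁) f} with hEdef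
  have hE : ThetaClass G E := classOf_thetaClass (G.mem_edgeSet.mpr hp1)
  have hmemE : s(p,p₁) ∈ E := mem_classOf_self (G.mem_edgeSet.mpr hp1)
  have hsplit_pp1 : ¬ SameSide G E p p₁ := edge_split hp1 hmemE
  have hint : p₁ ∈ interval G p g := mem_interval' (by rw [adj_dist1 hp1]; omega)
  have hsplit_pg : ¬ SameSide G E p g := by
    rcases interval_split hmed hE hint with hs | hs
    · exact absurd hs hsplit_pp1
    · exact fun h => hsplit_pp1 (sameSide_trans h (sameSide_symm hs))
  have hgIpv : g ∈ interval G p v := mem_interval' (hgate v hvF)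
  have hsplit_pv : ¬ SameSide G E p v := by
    rcases interval_split hmed hE hgIpv with hs | hs
    · exact absurd hs hsplit_pg
    · exact fun h => hsplit_pg (sameSide_trans h (sameSide_symm hs))
  have hElad : E ∈ ladder G p v :=
    (ladder_iff hmed).mpr ⟨hE, hsplit_pv, p₁, hp1, hmemE⟩
  have hCE : C ≠ E := by
    intro h
    exact hnoedge ⟨p₁, hp1, by rw [h]; exact hmemE⟩
  have horth : Orthogonal G C E :=
    hPOF.2 C (Or.inr rfl) E (Or.inl hElad) hCE
  obtain ⟨a, b, a₂, b₂, hab, hab2, hmab, hmab2, hEsplit, hEsame1, hEsame2⟩ :=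
    orth_quadrant hmed hC hE hCE horth
  have hn1 : ∃ n, n ∈ F ∧ SameSide G E n a := by
    by_cases ha : SameSide G C a v
    · exact ⟨a, ⟨ha, b, hab, hmab⟩, sameSide_refl a⟩
    · have hb : SameSide G C b v := by
        by_contra hb
        exact edge_split hab hmab (two_sided hmed hC ha (fun h => hb (sameSide_symm h)))
      exact ⟨b, ⟨hb, a, hab.symm, by rwa [Sym2.eq_swap] at hmab⟩,
        sameSide_symm hEsame1⟩
  have hn2 : ∃ n, n ∈ F ∧ SameSide G E n a₂ := by
    by_cases ha : SameSide G C a₂ v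
    · exact ⟨a₂, ⟨ha, b₂, hab2, hmab2⟩, sameSide_refl a₂⟩
    · have hb : SameSide G C b₂ v := by
        by_contra hb
        exact edge_split hab2 hmab2 (two_sided hmed hC ha (fun h => hb (sameSide_symm h)))
      exact ⟨b₂, ⟨hb, a₂, hab2.symm, by rwa [Sym2.eq_swap] at hmab2⟩,
        sameSide_symm hEsame2⟩
  obtain ⟨n1, hn1F, hn1a⟩ := hn1
  obtain ⟨n2, hn2F, hn2a⟩ := hn2
  have hsplit_pn1 : ¬ SameSide G E p n1 := by
    have hgn : g ∈ interval G p n1 := mem_interval' (hgate n1 hn1F)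
    rcases interval_split hmed hE hgn with hs | hs
    · exact absurd hs hsplit_pg
    · exact fun h => hsplit_pg (sameSide_trans h (sameSide_symm hs))
  have hsplit_pn2 : ¬ SameSide G E p n2 := by
    have hgn : g ∈ interval G p n2 := mem_interval' (hgate n2 hn2F)
    rcases interval_split hmed hE hgn with hs | hs
    · exact absurd hs hsplit_pg
    · exact fun h => hsplit_pg (sameSide_trans h (sameSide_symm hs))
  have hsame12 : SameSide G E n1 n2 :=
    two_sided hmed hE (fun h => hsplit_pn1 (sameSide_symm h)) hsplit_pn2
  exact hEsplit (sameSide_trans (sameSide_symm hn1a) (sameSide_trans hsame12 hn2a))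

include hmed in
lemma wchain_elem (hS : IsInducedCube G S) (hbasis : IsBasis G v₀ S v)
    (hclasses : cubeClasses G S = L) (hanti : IsAntiBasis G v₀ S w)
    (hLne : L.Nonempty) (hL : OutgoingPOF G v₀ v L) :
    ∀ {x y : V}, Relation.ReflTransGen (fun a b => NextMilestone G v₀ w a b) x y →
      Relation.ReflTransGen (fun a b => NextMilestone G v₀ w a b) y v →
      Relation.ReflTransGen (fun a b => NextMilestone G v₀ v a b) x y := by
  intro x y hxy
  induction hxy with
  | refl => exact fun _ => Relation.ReflTransGen.refl
  | tail h1 h2 ih =>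
    rename_i c y'
    intro hyv
    have hcv : Relation.ReflTransGen (fun a b => NextMilestone G v₀ w a b) c v :=
      Relation.ReflTransGen.head h2 hyv
    have hcne : c ≠ v := by
      intro h
      have h2' : NextMilestone G v₀ w v y' := h ▸ h2
      have hyw : y' = w := nm_det hmed h2' (fact_N hmed hS hbasis hclasses hanti hL)
      have hyv' : Relation.ReflTransGen (fun a b => NextMilestone G v₀ w a b) w v :=
        hyw ▸ hyv
      exact (fact_vw_ne hmed hS hbasis hclasses hanti hLne hL)
        (ms_self hmed hyv')
    have hJc : ∀ C' ∈ L, ¬ ∃ c', G.Adj c c' ∧ s(c,c') ∈ C' := fun C' hC'L =>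
      wchain_noedge hmed hS hbasis hclasses hanti hL hC'L hcne hcv
    have hlad := ladder_eq hmed hS hbasis hclasses hanti hJc
    exact (ih (Relation.ReflTransGen.head h2 hyv)).tail (nm_transport h2 hlad)

include hmed in
lemma A_to_C (hu : u ∈ interval G v₀ v)
    (hLne : L.Nonempty) (hL : OutgoingPOF G v₀ v L)
    (hS : IsInducedCube G S) (hbasis : IsBasis G v₀ S v)
    (hclasses : cubeClasses G S = L) (hanti : IsAntiBasis G v₀ S w)
    (hp : IsPenultimate G v₀ u v p)
    (hA : IsPenultimate G v₀ u w v) :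
    ∀ C ∈ L, ¬ IsPOF G (ladder G p v ∪ {C}) := by
  intro C hCL
  obtain ⟨hvMS, hvw, _⟩ := hA
  rcases Relation.ReflTransGen.cases_tail hvMS with h | ⟨r, hur, hrv⟩
  · exact absurd h.symm (fact_uv_ne hmed hp)
  have hrv_ne : r ≠ v := by
    intro h
    subst h
    exact hvw (nm_det hmed hrv (fact_N hmed hS hbasis hclasses hanti hL))
  have hrchain : Relation.ReflTransGen (fun a b => NextMilestone G v₀ w a b) r v :=
    Relation.ReflTransGen.single hrv
  have hJr : ∀ C' ∈ L, ¬ ∃ c', G.Adj r c' ∧ s(r,c') ∈ C' := fun C' hC'L =>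
    wchain_noedge hmed hS hbasis hclasses hanti hL hC'L hrv_ne hrchain
  have hlad_r : ladder G r w = ladder G r v :=
    ladder_eq hmed hS hbasis hclasses hanti hJr
  have hNrv : NextMilestone G v₀ v r v := nm_transport hrv hlad_r
  have hrMSv : r ∈ MilestoneSet G v₀ u v :=
    wchain_elem hmed hS hbasis hclasses hanti hLne hL hur hrchain
  have hrp : r = p := by
    have hdet : ∀ (x y y' : V), NextMilestone G v₀ v x y → NextMilestone G v₀ v x y' →
        y = y' := fun _ _ _ h h' => nm_det hmed h h'
    have h1 : Relation.ReflTransGen (fun a b => NextMilestone G v₀ v a b) u r := hrMSv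
    have h2 : Relation.ReflTransGen (fun a b => NextMilestone G v₀ v a b) u p := hp.1
    rcases chain_linear hdet h1 h2 with hh | hh
    · rcases Relation.ReflTransGen.cases_head hh with h | ⟨d, hd1, hd2⟩
      · exact h
      · have hdv : d = v := nm_det hmed hd1 hNrv
        rw [hdv] at hd2
        exact absurd (ms_self hmed (show p ∈ MilestoneSet G v₀ v v from hd2)) hp.2.1
    · rcases Relation.ReflTransGen.cases_head hh with h | ⟨d, hd1, hd2⟩
      · exact h.symm
      · have hdv : d = v := nm_det hmed hd1 hp.2.2
        rw [hdv] at hd2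
        exact absurd (ms_self hmed (show r ∈ MilestoneSet G v₀ v v from hd2)) hrv_ne
  subst hrp
  exact gate_argument hmed hL hCL
    (chainv_same hmed hu hL hCL hp.1) (hJr C hCL)

end Part8b

section Part8c
variable {V : Type*} [Fintype V] {G : SimpleGraph V} (hmed : MedianGraph G)
variable {v₀ u v : V} {L : Set (Set (Sym2 V))} {S : Set V} {w p : V}

include hmed in
lemma vchain_to_p (hp : IsPenultimate G v₀ u v p) {x : V}
    (hx : x ∈ MilestoneSet G v₀ u v) (hxv : x ≠ v) :
    Relation.ReflTransGen (fun a b => NextMilestone G v₀ v a b) x p := by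
  have hdet : ∀ (a b b' : V), NextMilestone G v₀ v a b → NextMilestone G v₀ v a b' →
      b = b' := fun _ _ _ h h' => nm_det hmed h h'
  have h1 : Relation.ReflTransGen (fun a b => NextMilestone G v₀ v a b) u x := hx
  have h2 : Relation.ReflTransGen (fun a b => NextMilestone G v₀ v a b) u p := hp.1
  rcases chain_linear hdet h1 h2 with hh | hh
  · exact hh
  · rcases Relation.ReflTransGen.cases_head hh with h | ⟨d, hd1, hd2⟩
    · exact h ▸ Relation.ReflTransGen.refl
    · have hdv : d = v := nm_det hmed hd1 hp.2.2
      rw [hdv] at hd2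
      exact absurd (ms_self hmed (show x ∈ MilestoneSet G v₀ v v from hd2)) hxv

include hmed in
lemma vchain_noedge (hu : u ∈ interval G v₀ v) (hL : OutgoingPOF G v₀ v L)
    (hS : IsInducedCube G S) (hbasis : IsBasis G v₀ S v)
    (hclasses : cubeClasses G S = L) (hanti : IsAntiBasis G v₀ S w)
    (hp : IsPenultimate G v₀ u v p)
    (hiii : ∀ C ∈ L, ¬ IsPOF G (ladder G p v ∪ {C}))
    {C : Set (Sym2 V)} (hCL : C ∈ L) {x : V}
    (hx : x ∈ MilestoneSet G v₀ u v) (hxv : x ≠ v) :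
    ¬ ∃ c, G.Adj x c ∧ s(x,c) ∈ C := by
  rintro ⟨c, hadj, hmem⟩
  apply hiii C hCL
  have hC := hL.1.1 C hCL
  have hxp := vchain_to_p hmed hp hx hxv
  have hpv_same : SameSide G C p v := chainv_same hmed hu hL hCL hp.1
  have hxv_same : SameSide G C x v := chainv_same hmed hu hL hCL hx
  have hvw_split : ¬ SameSide G C v w :=
    (split_vw_iff hmed hS hbasis hclasses hanti hC).mpr hCL
  have hxw_split : ¬ SameSide G C x w := split_of_same_split hxv_same hvw_split
  have hxp_same : SameSide G C x p := sameSide_trans hxv_same (sameSide_symm hpv_same)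
  have hpIxv : p ∈ interval G x v := chain_interval hmed hxp
  have hvIxw : v ∈ interval G x w := by
    refine interval_of_disjoint hmed (fun C' hC1 hC2 => ?_)
    have hC'L : C' ∈ L := (split_vw_iff hmed hS hbasis hclasses hanti hC1.1).mp hC2.2
    exact hC1.2 (chainv_same hmed hu hL hC'L hx)
  have hvIpw : v ∈ interval G p w := by
    refine interval_of_disjoint hmed (fun C' hC1 hC2 => ?_)
    have hC'L : C' ∈ L := (split_vw_iff hmed hS hbasis hclasses hanti hC1.1).mp hC2.2
    exact hC1.2 (chainv_same hmed hu hL hC'L hp.1)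
  have hpIxw : p ∈ interval G x w := by
    have e1 := mem_interval hpIxv
    have e2 := mem_interval hvIxw
    have e3 := mem_interval hvIpw
    exact mem_interval' (by omega)
  obtain ⟨cp, hcp, hcpm⟩ := prop_along hmed hC (G.dist x p) x p w c rfl hadj hmem
    hxw_split hpIxw hxp_same
  have hCpw : ¬ SameSide G C p w := split_of_same_split hpv_same hvw_split
  have split_pw_of_lad : ∀ D ∈ ladder G p v, ¬ SameSide G D p w := by
    intro D hDl
    obtain ⟨hDC, hDs, _⟩ := (ladder_iff hmed).mp hDl
    have hDnotL : D ∉ L := fun hDL => hDs (chainv_same hmed hu hL hDL hp.1)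
    have hDvw : SameSide G D v w := by
      by_contra hh
      exact hDnotL ((split_vw_iff hmed hS hbasis hclasses hanti hDC).mp hh)
    exact fun hpw => hDs (sameSide_trans hpw (sameSide_symm hDvw))
  constructor
  · intro D hD
    rcases hD with hD | hD
    · exact ((ladder_iff hmed).mp hD).1
    · rw [Set.mem_singleton_iff] at hD
      exact hD ▸ hC
  · intro D hD D' hD' hne
    rcases hD with hD | hD <;> rcases hD' with hD' | hD'
    · obtain ⟨h1, h2, c1, hc1, hm1⟩ := (ladder_iff hmed).mp hD
      obtain ⟨h1', h2', c2, hc2, hm2⟩ := (ladder_iff hmed).mp hD'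
      exact pair_orth hmed h1 h1' hne hc1 hm1 hc2 hm2 h2 h2'
    · rw [Set.mem_singleton_iff] at hD'
      subst hD'
      obtain ⟨h1, h2, c1, hc1, hm1⟩ := (ladder_iff hmed).mp hD
      exact pair_orth hmed h1 hC hne hc1 hm1 hcp hcpm (split_pw_of_lad D hD) hCpw
    · rw [Set.mem_singleton_iff] at hD
      subst hD
      obtain ⟨h1', h2', c2, hc2, hm2⟩ := (ladder_iff hmed).mp hD'
      exact pair_orth hmed hC h1' hne hcp hcpm hc2 hm2 hCpw (split_pw_of_lad D' hD')
    · rw [Set.mem_singleton_iff] at hD hD'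
      exact absurd (hD.trans hD'.symm) hne

include hmed in
lemma C_to_B (hu : u ∈ interval G v₀ v) (hLne : L.Nonempty) (hL : OutgoingPOF G v₀ v L)
    (hS : IsInducedCube G S) (hbasis : IsBasis G v₀ S v)
    (hclasses : cubeClasses G S = L) (hanti : IsAntiBasis G v₀ S w)
    (hp : IsPenultimate G v₀ u v p)
    (hiii : ∀ C ∈ L, ¬ IsPOF G (ladder G p v ∪ {C})) :
    MilestoneSet G v₀ u w = MilestoneSet G v₀ u v ∪ {w} := by
  have hvMSv : v ∈ MilestoneSet G v₀ u v := hp.1.tail hp.2.2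
  have hladeq : ∀ y ∈ MilestoneSet G v₀ u v, y ≠ v → ladder G y w = ladder G y v := by
    intro y hy hyv
    exact ladder_eq hmed hS hbasis hclasses hanti
      (fun C' hC'L => vchain_noedge hmed hu hL hS hbasis hclasses hanti hp hiii
        hC'L hy hyv)
  have hsub1 : MilestoneSet G v₀ u v ⊆ MilestoneSet G v₀ u w := by
    intro x hx
    induction hx with
    | refl => exact Relation.ReflTransGen.refl
    | tail h1 h2 ih =>
      rename_i y x'
      by_cases hyv : y = v
      · have hx'v : x' = v := nm_of_t hmed (hyv ▸ h2)
        rw [hx'v, ← hyv]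
        exact ih
      · exact ih.tail (nm_transport h2 ((hladeq y h1 hyv).symm))
  have hvMSw : v ∈ MilestoneSet G v₀ u w := hsub1 hvMSv
  have hN := fact_N hmed hS hbasis hclasses hanti hL
  have hwMS : w ∈ MilestoneSet G v₀ u w := hvMSw.tail hN
  apply Set.Subset.antisymm
  · intro x hx
    induction hx with
    | refl => exact Or.inl Relation.ReflTransGen.refl
    | tail h1 h2 ih =>
      rename_i y x'
      rcases ih with hyv | hyw
      · by_cases hyv' : y = v
        · have : x' = w := nm_det hmed (hyv' ▸ h2) hN
          exact Or.inr (by rw [this]; rfl)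
        · exact Or.inl (hyv.tail (nm_transport h2 (hladeq y hyv hyv')))
      · rw [Set.mem_singleton_iff] at hyw
        have : x' = w := nm_of_t hmed (hyw ▸ h2)
        exact Or.inr (by rw [this]; rfl)
  · intro x hx
    rcases hx with hx | hx
    · exact hsub1 hx
    · rw [Set.mem_singleton_iff] at hx
      exact hx ▸ hwMS

include hmed in
lemma B_to_A (hLne : L.Nonempty) (hL : OutgoingPOF G v₀ v L)
    (hS : IsInducedCube G S) (hbasis : IsBasis G v₀ S v)
    (hclasses : cubeClasses G S = L) (hanti : IsAntiBasis G v₀ S w)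
    (hp : IsPenultimate G v₀ u v p)
    (hB : MilestoneSet G v₀ u w = MilestoneSet G v₀ u v ∪ {w}) :
    IsPenultimate G v₀ u w v := by
  refine ⟨?_, fact_vw_ne hmed hS hbasis hclasses hanti hLne hL,
    fact_N hmed hS hbasis hclasses hanti hL⟩
  rw [hB]
  exact Or.inl (hp.1.tail hp.2.2)

end Part8c


/-- In a median graph with basepoint `v₀`, let `u ∈ I(v₀,v)`, `L`
a nonempty POF outgoing from `v`, and `w` the anti-basis of the induced
hypercube with basis `v` and Θ-classes `L`; let `p = π̄(u,v)` be the penultimate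
milestone, so `L̄_{u,v} = L_{p,v}`. Then: `π̄(u,w) = v` iff
`Π(u,w) = Π(u,v) ∪ {w}` iff no class of `L` extends `L̄_{u,v}` to a POF. -/
theorem penultimate_milestone_characterization {V : Type*} [Fintype V]
    (G : SimpleGraph V) (hmed : MedianGraph G) (v₀ u v : V)
    (hu : u ∈ interval G v₀ v)
    (L : Set (Set (Sym2 V))) (hLne : L.Nonempty) (hL : OutgoingPOF G v₀ v L)
    (S : Set V) (hS : IsInducedCube G S) (hbasis : IsBasis G v₀ S v)
    (hclasses : cubeClasses G S = L)
    (w : V) (hanti : IsAntiBasis G v₀ S w)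
    (p : V) (hp : IsPenultimate G v₀ u v p) :
    (IsPenultimate G v₀ u w v ↔
      MilestoneSet G v₀ u w = MilestoneSet G v₀ u v ∪ {w}) ∧
    (MilestoneSet G v₀ u w = MilestoneSet G v₀ u v ∪ {w} ↔
      ∀ C ∈ L, ¬ IsPOF G (ladder G p v ∪ {C})) := by
  have hAC := A_to_C hmed hu hLne hL hS hbasis hclasses hanti hp
  have hCB := C_to_B hmed hu hLne hL hS hbasis hclasses hanti hp
  have hBA := B_to_A hmed hLne hL hS hbasis hclasses hanti hp
  exact ⟨⟨fun hA => hCB (hAC hA), hBA⟩, ⟨fun hB => hAC (hBA hB), hCB⟩⟩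

end MedianPaper
end

section
/- There exists a median graph G of dimension 2 together with vertices r₁, a₁, b₁ such that d(r₁,a₁) = ecc(r₁), d(a₁,b₁) = ecc(a₁), and yet d(a₁,b₁) < diam(G); in other words, the 2-sweep heuristic (a BFS from an arbitrary vertex r₁ to a farthest vertex a₁, followed by a BFS from a₁ to a farthest vertex b₁) can fail to return the diameter on median graphs. A witness is the 5-vertex graph obtained from a 4-cycle by attaching a pendant vertex. -/
namespace MedianPaper

variable {V : Type*}

/-- The 5-vertex graph obtained from a 4-cycle `0-1-3-2-0` by attaching the
pendant vertex `4` to vertex `3`. -/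
def pendantSquare : SimpleGraph (Fin 5) :=
  SimpleGraph.fromRel (fun a b =>
    (a = 0 ∧ b = 1) ∨ (a = 0 ∧ b = 2) ∨ (a = 1 ∧ b = 3) ∨
    (a = 2 ∧ b = 3) ∨ (a = 3 ∧ b = 4))

end MedianPaper

/-! The pendant square: the 2-sweep run `1 → 2 → 4` stops at `d(2, 4) = 2`, whereas
`d(0, 4) = 3`. All distances are certified by a BFS table, after which the median property,
the eccentricities and the sweep are finite checks; the square `{0, 1, 2, 3}` is an induced
`Q₂`, and `Q₃` does not fit in five vertices. -/

namespace SimpleGraph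

variable {V : Type*} {G : SimpleGraph V} {u : V} {f : V → ℕ}

lemma le_add_length_of_adj_le_succ (hf : ∀ v w, G.Adj v w → f w ≤ f v + 1) {v : V}
    (p : G.Walk u v) : f v ≤ f u + p.length := by
  induction p with
  | nil => simp
  | cons hadj _ ih =>
    rw [Walk.length_cons]
    have := hf _ _ hadj
    omega

lemma exists_walk_length_eq_of_exists_pred (hu : f u = 0)
    (hpred : ∀ v ≠ u, ∃ w, G.Adj w v ∧ f w + 1 = f v) (v : V) :
    ∃ p : G.Walk u v, p.length = f v := by
  induction hn : f v using Nat.strong_induction_on generalizing v with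
  | _ n ih =>
    by_cases hv : v = u
    · subst hv
      exact ⟨.nil, by simp [hu, ← hn]⟩
    · obtain ⟨w, hadj, hw⟩ := hpred v hv
      obtain ⟨p, hp⟩ := ih (f w) (by omega) w rfl
      exact ⟨p.concat hadj, by simp [hp, hw, hn]⟩

lemma dist_eq_of_bfs_labelling (hu : f u = 0) (hf : ∀ v w, G.Adj v w → f w ≤ f v + 1)
    (hpred : ∀ v ≠ u, ∃ w, G.Adj w v ∧ f w + 1 = f v) (v : V) : G.dist u v = f v := by
  obtain ⟨p, hp⟩ := exists_walk_length_eq_of_exists_pred hu hpred v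
  obtain ⟨q, hq⟩ := Reachable.exists_walk_length_eq_dist ⟨p⟩
  have := le_add_length_of_adj_le_succ hf q
  have := G.dist_le p
  omega

end SimpleGraph

namespace MedianPaper

open SimpleGraph

lemma IsCubeDim.two_pow_le_card {V : Type*} [Fintype V] {G : SimpleGraph V} {S : Set V} {k : ℕ}
    (h : IsCubeDim G S k) : 2 ^ k ≤ Fintype.card V := by
  obtain ⟨e⟩ := h
  classical
  calc 2 ^ k = Fintype.card (Finset (Fin k)) := by simp
    _ ≤ Fintype.card V :=
      Fintype.card_le_of_injective (fun A => (e.symm A : V))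
        fun A B hAB => e.symm.injective (Subtype.ext hAB)

instance : DecidableRel pendantSquare.Adj :=
  inferInstanceAs (DecidableRel (SimpleGraph.fromRel _).Adj)

def pendantSquareDist : Fin 5 → Fin 5 → ℕ :=
  ![![0, 1, 1, 2, 3], ![1, 0, 2, 1, 2], ![1, 2, 0, 1, 2], ![2, 1, 1, 0, 1], ![3, 2, 2, 1, 0]]

lemma pendantSquare_dist (u v : Fin 5) : pendantSquare.dist u v = pendantSquareDist u v := by
  revert v
  apply dist_eq_of_bfs_labelling <;> revert u <;> decide

lemma pendantSquare_connected : pendantSquare.Connected where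
  preconnected u v := by
    obtain rfl | huv := eq_or_ne u v
    · rfl
    · exact Reachable.of_dist_ne_zero (by rw [pendantSquare_dist]; revert u v; decide)

lemma pendantSquare_existsUnique_median (x y z : Fin 5) : ∃! m,
    m ∈ interval pendantSquare x y ∧ m ∈ interval pendantSquare y z ∧
      m ∈ interval pendantSquare z x := by
  simp only [interval, Set.mem_ofPred_eq, pendantSquare_dist, ExistsUnique]
  revert x y z
  decide

def squareToCube (x : ({4}ᶜ : Set (Fin 5))) : Finset (Fin 2) :=
  ![∅, {0}, {1}, {0, 1}, ∅] x

lemma card_symmDiff_squareToCube_eq_one_iff (a b : ({4}ᶜ : Set (Fin 5))) :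
    (symmDiff (squareToCube a) (squareToCube b)).card = 1 ↔ pendantSquare.Adj a b := by
  revert a b
  decide

lemma isCubeDim_pendantSquare_square : IsCubeDim pendantSquare ({4}ᶜ : Set (Fin 5)) 2 :=
  ⟨{ Equiv.ofBijective squareToCube (by decide) with
      map_rel_iff' := card_symmDiff_squareToCube_eq_one_iff _ _ }⟩

/-- There is a median graph of dimension 2 (a 4-cycle with a
pendant vertex) and vertices `r₁, a₁, b₁` with `d(r₁,a₁) = ecc(r₁)` and
`d(a₁,b₁) = ecc(a₁)`, yet `d(a₁,b₁) < diam(G)`: the 2-sweep heuristic fails. -/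
theorem two_sweep_fails_on_median_graphs :
    MedianGraph pendantSquare ∧ GraphDim pendantSquare 2 ∧
    ∃ r₁ a₁ b₁ : Fin 5,
      (∀ x, pendantSquare.dist r₁ x ≤ pendantSquare.dist r₁ a₁) ∧
      (∀ x, pendantSquare.dist a₁ x ≤ pendantSquare.dist a₁ b₁) ∧
      (∃ x y : Fin 5, pendantSquare.dist a₁ b₁ < pendantSquare.dist x y) := by
  refine ⟨⟨pendantSquare_connected, pendantSquare_existsUnique_median⟩,
    ⟨⟨_, isCubeDim_pendantSquare_square⟩, fun S k hS => ?_⟩, 1, 2, 4, ?_⟩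
  · have hcard : 2 ^ k < 2 ^ 3 := hS.two_pow_le_card.trans_lt (by simp)
    exact Nat.lt_succ_iff.1 ((Nat.pow_lt_pow_iff_right (by norm_num)).1 hcard)
  · simp only [pendantSquare_dist]
    decide

end MedianPaper
end

section
/- In a median graph, every convex set of vertices is gated. -/
/-! A vertex `g` of `H` nearest to `x` is the gate of `x`: for `h ∈ H` the median of
`x, g, h` lies in `I(g,h) ⊆ H` and in `I(x,g)`, so by minimality it is `g` itself,
whence `g ∈ I(x,h)`. -/

namespace MedianPaper

variable {V : Type*}

theorem mem_interval_comm {G : SimpleGraph V} {u v w : V} :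
    w ∈ interval G u v ↔ w ∈ interval G v u := by
  simp only [interval, Set.mem_ofPred_eq, G.dist_comm (u := u), G.dist_comm (v := w)]
  omega

theorem eq_of_mem_interval_of_dist_le {G : SimpleGraph V} (hG : G.Connected) {x g m : V}
    (hm : m ∈ interval G x g) (hle : G.dist x g ≤ G.dist x m) : m = g :=
  hG.dist_eq_zero_iff.mp (by simp only [interval, Set.mem_ofPred_eq] at hm; omega)

theorem mem_interval_of_isMedian_of_forall_dist_le {G : SimpleGraph V} (hG : G.Connected)
    {H : Set V} {x g : V} (hmin : ∀ h ∈ H, G.dist x g ≤ G.dist x h)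
    (hmed : ∀ h ∈ H, ∃ m ∈ H, IsMedian G x g h m) : ∀ h ∈ H, g ∈ interval G x h := by
  intro h hh
  obtain ⟨m, hmH, hm_xg, -, hm_hx⟩ := hmed h hh
  have hmg : m = g := eq_of_mem_interval_of_dist_le hG hm_xg (hmin m hmH)
  exact mem_interval_comm.mp (hmg ▸ hm_hx)

theorem convex_implies_gated_general {V : Type*} (G : SimpleGraph V)
    (hmed : MedianGraph G) (H : Set V) (hne : H.Nonempty)
    (hconv : ConvexSet G H) : GatedSet G H := by
  intro x
  set g := Function.argminOn (G.dist x) H hne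
  have hg : g ∈ H := Function.argminOn_mem _ H hne
  refine ⟨g, hg, mem_interval_of_isMedian_of_forall_dist_le hmed.1
    (fun h hh => Function.argminOn_le _ H hh) fun h hh => ?_⟩
  obtain ⟨m, hm, -⟩ := hmed.2 x g h
  exact ⟨m, hconv g hg h hh hm.2.1, hm⟩

/-- In a median graph, every (nonempty) convex set of vertices is
gated. -/
theorem convex_implies_gated {V : Type*} [Fintype V] (G : SimpleGraph V)
    (hmed : MedianGraph G) (H : Set V) (hne : H.Nonempty)
    (hconv : ConvexSet G H) : GatedSet G H :=
  convex_implies_gated_general G hmed H hne hconv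

end MedianPaper
end

section
/- In a median graph G, for every Θ-class E_i: the graph G deprived of the edges of E_i has exactly two connected components H_i' and H_i''; the edges of E_i form a matching (no two edges of E_i share an endpoint); both H_i' and H_i'' are convex; and if uv is an edge of E_i with u ∈ H_i' and v ∈ H_i'', then H_i' = {x ∈ V : d(x,u) < d(x,v)} and H_i'' = {x ∈ V : d(x,v) < d(x,u)}. -/
namespace MedianPaper

variable {V : Type*}

/-!
For an edge `ab` let `W(a, b)` (`closerTo G a b`) be the set of vertices closer to `a` than to `b`.
A median graph is bipartite, so `W(a, b)` and `W(b, a)` partition the vertices. Opposite edges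
of a square cut the graph in the same way, hence every edge `pq` of the Θ-class of `ab` has
`W(p, q) = W(a, b)` or `W(p, q) = W(b, a)`; conversely, the quadrangle condition shows, by
induction on `d(p, a)`, that every edge from `W(a, b)` to `W(b, a)` is Θ-related to `ab`. So the
class is exactly the cut between `W(a, b)` and `W(b, a)`. A geodesic between two vertices of
`W(a, b)` that left `W(a, b)` would do so through an edge `pq` with `W(p, q) = W(a, b)` and then
could not come back, so `W(a, b)` is convex, hence connected in `G` minus the class. Thus the
halfspaces are `W(a, b)` and `W(b, a)`, and two class edges `xy`, `xy'` both give the halfspace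
`W(x, y) = W(x, y')`, which forces `y = y'`.
-/

open SimpleGraph

section

variable {G : SimpleGraph V} {H H' : Set V} {a b p q u v w x y y' z : V}

lemma IsSquare.swap (h : IsSquare G u v x y) : IsSquare G x y u v :=
  let ⟨huv, hxy, hux, hvy, huy, hvx⟩ := h
  ⟨hxy, huv, hux.symm, hvy.symm, hvx.symm, huy.symm⟩

lemma IsSquare.flip (h : IsSquare G u v x y) : IsSquare G v u y x :=
  let ⟨huv, hxy, hux, hvy, huy, hvx⟩ := h
  ⟨huv.symm, hxy.symm, hvy, hux, hvx, huy⟩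

def closerTo (G : SimpleGraph V) (a b : V) : Set V :=
  {x | G.dist x a < G.dist x b}

@[simp]
lemma mem_closerTo : x ∈ closerTo G a b ↔ G.dist x a < G.dist x b :=
  Iff.rfl

lemma disjoint_closerTo : Disjoint (closerTo G a b) (closerTo G b a) :=
  Set.disjoint_left.mpr fun _ h h' => lt_asymm (mem_closerTo.mp h) h'

lemma left_mem_closerTo (hab : G.Adj a b) : a ∈ closerTo G a b := by
  simp [dist_eq_one_iff_adj.mpr hab]

lemma exists_adj_dist_eq_add_one (h : G.dist u v ≠ 0) :
    ∃ w, G.Adj u w ∧ G.dist u v = G.dist w v + 1 := by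
  obtain ⟨p, hp⟩ := exists_walk_of_dist_ne_zero h
  cases p with
  | nil => simp at h
  | cons hadj p =>
    have h₁ := dist_le p
    have h₂ := hadj.reachable.dist_triangle_left v
    rw [Walk.length_cons] at hp
    rw [dist_eq_one_iff_adj.mpr hadj] at h₂
    exact ⟨_, hadj, by omega⟩

lemma exists_adj_mem_not_mem_of_geodesic {S : Set V} (hG : G.Connected) (hx : x ∈ S)
    (hz : z ∉ S) :
    ∃ p q, p ∈ S ∧ q ∉ S ∧ G.Adj p q ∧ G.dist x p + 1 + G.dist q z = G.dist x z := by
  induction hk : G.dist x z using Nat.strong_induction_on generalizing x with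
  | _ k ih =>
  have hxz : G.dist x z ≠ 0 := fun h => hz (hG.dist_eq_zero_iff.mp h ▸ hx)
  obtain ⟨w, hxw, hw⟩ := exists_adj_dist_eq_add_one hxz
  by_cases hwS : w ∈ S
  · obtain ⟨p, q, hp, hq, hpq, hpqz⟩ := ih _ (by omega) hwS rfl
    refine ⟨p, q, hp, hq, hpq, ?_⟩
    have h₁ := hG.dist_triangle (u := x) (v := w) (w := p)
    have h₂ := hG.dist_triangle (u := x) (v := p) (w := z)
    have h₃ := hG.dist_triangle (u := p) (v := q) (w := z)
    rw [dist_eq_one_iff_adj.mpr hxw] at h₁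
    rw [dist_eq_one_iff_adj.mpr hpq] at h₃
    omega
  · exact ⟨x, w, hx, hwS, hxw, by rw [dist_self]; omega⟩

lemma ConvexSet.reachable_deleteEdges {S : Set V} {C : Set (Sym2 V)} (hG : G.Connected)
    (hS : ConvexSet G S) (hC : ∀ x ∈ S, ∀ y ∈ S, G.Adj x y → s(x, y) ∉ C) (hx : x ∈ S)
    (hy : y ∈ S) : (G.deleteEdges C).Reachable x y := by
  induction hk : G.dist x y using Nat.strong_induction_on generalizing x with
  | _ k ih =>
  rcases Nat.eq_zero_or_pos k with rfl | hk₀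
  · rw [hG.dist_eq_zero_iff.mp hk]
  obtain ⟨w, hxw, hw⟩ := exists_adj_dist_eq_add_one (hk ▸ hk₀.ne')
  have hwS : w ∈ S := hS x hx y hy <| by
    simp only [interval, Set.mem_ofPred_eq, dist_eq_one_iff_adj.mpr hxw]
    omega
  have hxw' : (G.deleteEdges C).Adj x w := (deleteEdges_adj ..).mpr ⟨hxw, hC x hx w hwS hxw⟩
  exact hxw'.reachable.trans (ih _ (by omega) hwS rfl)

lemma mem_of_reachable_deleteEdges {S : Set V} {C : Set (Sym2 V)}
    (hC : ∀ x ∈ S, ∀ y ∉ S, G.Adj x y → s(x, y) ∈ C) (hxy : (G.deleteEdges C).Reachable x y)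
    (hx : x ∈ S) : y ∈ S := by
  by_contra hy
  obtain ⟨p⟩ := hxy
  obtain ⟨d, -, hd₁, hd₂⟩ := p.exists_boundary_dart S hx hy
  obtain ⟨hadj, hnot⟩ := (deleteEdges_adj ..).mp d.adj
  exact hnot (hC _ hd₁ _ hd₂ hadj)

namespace IsHalfspacePair

variable {C : Set (Sym2 V)} {K K' : Set V}

lemma symm (h : IsHalfspacePair G C H H') : IsHalfspacePair G C H' H :=
  let ⟨hH, hH', hdisj, hunion, hreach, hreach', hsep⟩ := h
  ⟨hH', hH, hdisj.symm, Set.union_comm H H' ▸ hunion, hreach', hreach,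
    fun x hx y hy hxy => hsep y hy x hx hxy.symm⟩

lemma union_eq_univ (h : IsHalfspacePair G C H H') : H ∪ H' = Set.univ :=
  h.2.2.2.1

lemma right_eq_compl (h : IsHalfspacePair G C H H') : H' = Hᶜ :=
  (IsCompl.compl_eq ⟨h.2.2.1, codisjoint_iff.mpr h.union_eq_univ⟩).symm

lemma subset_of_mem (h : IsHalfspacePair G C H H') (h' : IsHalfspacePair G C K K') (hw : w ∈ H)
    (hw' : w ∈ K) : H ⊆ K := fun x hx => by
  by_contra hxK
  exact h'.2.2.2.2.2.2 w hw' x (h'.right_eq_compl ▸ hxK) (h.2.2.2.2.1 w hw x hx)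

lemma eq_of_mem (h : IsHalfspacePair G C H H') (h' : IsHalfspacePair G C K K') (hw : w ∈ H)
    (hw' : w ∈ K) : H = K ∧ H' = K' := by
  have hHK := (h.subset_of_mem h' hw hw').antisymm (h'.subset_of_mem h hw' hw)
  exact ⟨hHK, by rw [h.right_eq_compl, h'.right_eq_compl, hHK]⟩

end IsHalfspacePair

namespace MedianGraph

lemma eq_of_isMedian (hmed : MedianGraph G) (hp : IsMedian G x y z p)
    (hq : IsMedian G x y z q) : p = q :=
  (hmed.2 x y z).unique hp hq

lemma dist_ne_of_adj (hmed : MedianGraph G) (z : V) (hpq : G.Adj p q) :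
    G.dist z p ≠ G.dist z q := by
  intro heq
  obtain ⟨m, ⟨hm₁, hm₂, hm₃⟩, -⟩ := hmed.2 p q z
  simp only [interval, Set.mem_ofPred_eq, dist_eq_one_iff_adj.mpr hpq] at hm₁ hm₂ hm₃
  have : G.dist q p = 1 := dist_eq_one_iff_adj.mpr hpq.symm
  rcases Nat.eq_zero_or_pos (G.dist p m) with h | h
  · obtain rfl := hmed.1.dist_eq_zero_iff.mp h
    grind [SimpleGraph.dist_comm]
  · obtain rfl : m = q := hmed.1.dist_eq_zero_iff.mp (by omega)
    grind [SimpleGraph.dist_comm]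

lemma dist_eq_add_one_or (hmed : MedianGraph G) (z : V) (hpq : G.Adj p q) :
    G.dist z q = G.dist z p + 1 ∨ G.dist z p = G.dist z q + 1 := by
  have := hmed.dist_ne_of_adj z hpq
  rcases hpq.diff_dist_adj (u := z) with h | h | h <;> omega

lemma dist_eq_two (hmed : MedianGraph G) (hxu : G.Adj x u) (huy : G.Adj u y) (hxy : x ≠ y) :
    G.dist x y = 2 := by
  have h₀ : G.dist x y ≠ 0 := fun h => hxy (hmed.1.dist_eq_zero_iff.mp h)
  have h₁ : G.dist x y ≠ 1 := fun h => hmed.dist_ne_of_adj u (dist_eq_one_iff_adj.mp h)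
    (by rw [dist_eq_one_iff_adj.mpr hxu.symm, dist_eq_one_iff_adj.mpr huy])
  have h₂ := hmed.1.dist_triangle (u := x) (v := u) (w := y)
  rw [dist_eq_one_iff_adj.mpr hxu, dist_eq_one_iff_adj.mpr huy] at h₂
  omega

lemma exists_quadrangle (hmed : MedianGraph G) (hvp : G.Adj v p) (hvq : G.Adj v q)
    (hpq : p ≠ q) (hp : G.dist z v = G.dist z p + 1) (hq : G.dist z v = G.dist z q + 1) :
    ∃ w, G.Adj p w ∧ G.Adj q w ∧ G.dist z v = G.dist z w + 2 := by
  obtain ⟨m, ⟨hm₁, hm₂, hm₃⟩, -⟩ := hmed.2 p q z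
  simp only [interval, Set.mem_ofPred_eq, hmed.dist_eq_two hvp.symm hvq hpq] at hm₁ hm₂ hm₃
  have hqp := hmed.dist_eq_two hvq.symm hvp hpq.symm
  have hmp : m ≠ p := by rintro rfl; grind [SimpleGraph.dist_comm]
  have hmq : m ≠ q := by rintro rfl; grind [SimpleGraph.dist_comm]
  have hpm := hmed.1.pos_dist_of_ne hmp.symm
  have hmq' := hmed.1.pos_dist_of_ne hmq
  refine ⟨m, dist_eq_one_iff_adj.mp (by omega), dist_eq_one_iff_adj.mp ?_, ?_⟩ <;>
    grind [SimpleGraph.dist_comm]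

lemma dist_lt_of_isSquare (hmed : MedianGraph G) (hsq : IsSquare G u v x y)
    (h : G.dist z u < G.dist z v) : G.dist z x < G.dist z y := by
  obtain ⟨huv, hxy, hux, hvy, huy, hvx⟩ := hsq
  by_contra! hyx
  have hzv := hmed.dist_eq_add_one_or z huv
  have hzx := hmed.dist_eq_add_one_or z hxy
  have hvy' := hvy.diff_dist_adj (u := z)
  rcases hmed.dist_eq_add_one_or z hux with hzu | hzu
  · -- both `u` and `y` would be medians of `z, v, x`
    have hvx₂ := hmed.dist_eq_two huv.symm hux hvx
    refine huy (hmed.eq_of_isMedian (x := z) (y := v) (z := x) ?_ ?_) <;>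
      simp only [IsMedian, interval, Set.mem_ofPred_eq] <;>
      grind [SimpleGraph.dist_comm, dist_eq_one_iff_adj]
  · omega

lemma compl_closerTo (hmed : MedianGraph G) (hab : G.Adj a b) :
    (closerTo G a b)ᶜ = closerTo G b a := by
  ext x
  have := hmed.dist_ne_of_adj x hab
  simp only [Set.mem_compl_iff, mem_closerTo]
  omega

lemma closerTo_eq_of_isSquare (hmed : MedianGraph G) (hsq : IsSquare G u v x y) :
    closerTo G u v = closerTo G x y :=
  Set.ext fun _ => ⟨hmed.dist_lt_of_isSquare hsq, hmed.dist_lt_of_isSquare hsq.swap⟩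

lemma closerTo_eq_or_of_reflTransGen (hmed : MedianGraph G) {f : Sym2 V}
    (hf : Relation.ReflTransGen (Theta0 G) s(a, b) f) (hpq : f = s(p, q)) :
    closerTo G p q = closerTo G a b ∨ closerTo G p q = closerTo G b a := by
  induction hf generalizing p q with
  | refl => rcases Sym2.eq_iff.mp hpq with ⟨rfl, rfl⟩ | ⟨rfl, rfl⟩ <;> simp
  | tail _ hstep ih =>
    obtain ⟨u, v, x, y, hsq, rfl, rfl⟩ := hstep
    rcases Sym2.eq_iff.mp hpq with ⟨rfl, rfl⟩ | ⟨rfl, rfl⟩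
    · rw [← hmed.closerTo_eq_of_isSquare hsq]
      exact ih rfl
    · rw [← hmed.closerTo_eq_of_isSquare hsq.flip]
      exact ih Sym2.eq_swap

lemma closerTo_eq_of_reflTransGen (hmed : MedianGraph G)
    (hf : Relation.ReflTransGen (Theta0 G) s(a, b) s(p, q)) (hpq : G.Adj p q)
    (hp : p ∈ closerTo G a b) : closerTo G p q = closerTo G a b :=
  (hmed.closerTo_eq_or_of_reflTransGen hf rfl).resolve_right fun h =>
    Set.disjoint_left.mp disjoint_closerTo hp (h ▸ left_mem_closerTo hpq)

lemma reflTransGen_theta0_of_adj (hmed : MedianGraph G) (hab : G.Adj a b) (hpq : G.Adj p q)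
    (hp : p ∈ closerTo G a b) (hq : q ∉ closerTo G a b) :
    Relation.ReflTransGen (Theta0 G) s(a, b) s(p, q) := by
  induction hk : G.dist p a using Nat.strong_induction_on generalizing p q with
  | _ k ih =>
  simp only [mem_closerTo, not_lt] at hp hq
  have hpb := hmed.dist_eq_add_one_or p hab
  have hqb := hmed.dist_eq_add_one_or q hab
  have hqa := hmed.dist_eq_add_one_or a hpq
  have hqb' := hmed.dist_eq_add_one_or b hpq
  rcases Nat.eq_zero_or_pos k with rfl | hk₀
  · obtain rfl := hmed.1.dist_eq_zero_iff.mp hk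
    obtain rfl : q = b := hmed.1.dist_eq_zero_iff.mp (by grind [SimpleGraph.dist_comm])
    rfl
  have hpa : G.dist p a ≠ 0 := by omega
  -- a step `pw` towards `a` and the quadrangle condition at `b` give a square `w r p q` whose
  -- edge `wr` again joins the two sides, one step closer to `a`
  obtain ⟨w, hpw, hw⟩ := exists_adj_dist_eq_add_one hpa
  have hwb := hmed.dist_eq_add_one_or b hpw
  have hwb' := hmed.1.dist_triangle (u := w) (v := a) (w := b)
  rw [dist_eq_one_iff_adj.mpr hab] at hwb'
  have hqw : q ≠ w := by rintro rfl; grind [SimpleGraph.dist_comm]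
  obtain ⟨r, hqr, hwr, hr⟩ := hmed.exists_quadrangle (z := b) hpq hpw hqw
    (by grind [SimpleGraph.dist_comm]) (by grind [SimpleGraph.dist_comm])
  have hra := hmed.dist_eq_add_one_or a hqr
  have hra' := hmed.1.dist_triangle (u := r) (v := b) (w := a)
  rw [dist_eq_one_iff_adj.mpr hab.symm] at hra'
  have hwr_class := ih (k - 1) (by omega) hwr (by grind [mem_closerTo, SimpleGraph.dist_comm])
    (by grind [mem_closerTo, SimpleGraph.dist_comm]) (by omega)
  refine hwr_class.tail ⟨w, r, p, q, ⟨hwr, hpq, hpw.symm, hqr.symm, ?_, ?_⟩, rfl, rfl⟩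
  · rintro rfl; grind [SimpleGraph.dist_comm]
  · rintro rfl; grind [SimpleGraph.dist_comm]

lemma convexSet_closerTo (hmed : MedianGraph G) (hab : G.Adj a b) :
    ConvexSet G (closerTo G a b) := by
  intro x hx y hy z hz
  by_contra hzW
  obtain ⟨p, q, hp, hq, hpq, hpqz⟩ := exists_adj_mem_not_mem_of_geodesic hmed.1 hx hzW
  have hW := hmed.closerTo_eq_of_reflTransGen
    (hmed.reflTransGen_theta0_of_adj hab hpq hp hq) hpq hp
  -- `q` lies between `p` and `y` on a geodesic, so it is nearer to `y` than `p` is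
  have hyq : y ∈ closerTo G p q := hW ▸ hy
  rw [mem_closerTo] at hyq
  simp only [interval, Set.mem_ofPred_eq] at hz
  have := hmed.1.dist_triangle (u := x) (v := p) (w := z)
  have := hmed.1.dist_triangle (u := p) (v := q) (w := z)
  have := hmed.1.dist_triangle (u := x) (v := p) (w := y)
  have := hmed.1.dist_triangle (u := p) (v := z) (w := y)
  have := hmed.1.dist_triangle (u := q) (v := z) (w := y)
  have := dist_eq_one_iff_adj.mpr hpq
  grind [SimpleGraph.dist_comm]

lemma not_theta_of_mem_closerTo (hmed : MedianGraph G) (hx : x ∈ closerTo G a b)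
    (hy : y ∈ closerTo G a b) (hxy : G.Adj x y) : ¬ Theta G s(a, b) s(x, y) := fun h => by
  have hW := hmed.closerTo_eq_of_reflTransGen h.2.2 hxy hx
  have : y ∈ closerTo G x y := hW ▸ hy
  simp at this

lemma isHalfspacePair_closerTo (hmed : MedianGraph G) (hab : G.Adj a b) :
    IsHalfspacePair G {f | Theta G s(a, b) f} (closerTo G a b) (closerTo G b a) := by
  have hba : {f | Theta G s(b, a) f} = {f | Theta G s(a, b) f} := by rw [Sym2.eq_swap]
  refine ⟨⟨a, left_mem_closerTo hab⟩, ⟨b, left_mem_closerTo hab.symm⟩, disjoint_closerTo,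
    by rw [← hmed.compl_closerTo hab, Set.union_compl_self], ?_, ?_, ?_⟩
  · exact fun x hx y hy => (hmed.convexSet_closerTo hab).reachable_deleteEdges hmed.1
      (fun _ hu _ hv huv => hmed.not_theta_of_mem_closerTo hu hv huv) hx hy
  · rw [← hba]
    exact fun x hx y hy => (hmed.convexSet_closerTo hab.symm).reachable_deleteEdges hmed.1
      (fun _ hu _ hv huv => hmed.not_theta_of_mem_closerTo hu hv huv) hx hy
  · intro x hx y hy hxy
    refine Set.disjoint_left.mp disjoint_closerTo
      (mem_of_reachable_deleteEdges (fun u hu v hv huv => ?_) hxy hx) hy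
    exact ⟨hab, huv, hmed.reflTransGen_theta0_of_adj hab huv hu hv⟩

lemma isHalfspacePair_closerTo_of_theta (hmed : MedianGraph G) (hab : G.Adj a b)
    (huv : Theta G s(a, b) s(u, v)) :
    IsHalfspacePair G {f | Theta G s(a, b) f} (closerTo G u v) (closerTo G v u) := by
  have huv' : G.Adj u v := huv.2.1
  rw [← hmed.compl_closerTo huv']
  rcases hmed.closerTo_eq_or_of_reflTransGen huv.2.2 rfl with h | h <;> rw [h]
  · rw [hmed.compl_closerTo hab]
    exact hmed.isHalfspacePair_closerTo hab
  · rw [hmed.compl_closerTo hab.symm]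
    exact (hmed.isHalfspacePair_closerTo hab).symm

lemma eq_closerTo_of_isHalfspacePair (hmed : MedianGraph G) (hab : G.Adj a b)
    (h : IsHalfspacePair G {f | Theta G s(a, b) f} H H') :
    (H = closerTo G a b ∧ H' = closerTo G b a) ∨ (H = closerTo G b a ∧ H' = closerTo G a b) := by
  have hW := hmed.isHalfspacePair_closerTo hab
  rcases h.union_eq_univ ▸ Set.mem_univ a with ha | ha
  · exact .inl (h.eq_of_mem hW ha (left_mem_closerTo hab))
  · exact .inr (h.symm.eq_of_mem hW ha (left_mem_closerTo hab)).symm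

lemma eq_of_theta_of_theta (hmed : MedianGraph G) (hab : G.Adj a b)
    (hy : Theta G s(a, b) s(x, y)) (hy' : Theta G s(a, b) s(x, y')) : y = y' := by
  have hxy : G.Adj x y := hy.2.1
  have hxy' : G.Adj x y' := hy'.2.1
  obtain ⟨hW, -⟩ := (hmed.isHalfspacePair_closerTo_of_theta hab hy).eq_of_mem
    (hmed.isHalfspacePair_closerTo_of_theta hab hy') (left_mem_closerTo hxy)
    (left_mem_closerTo hxy')
  have hyW : y ∉ closerTo G x y' := hW ▸ by simp
  rw [mem_closerTo, not_lt, dist_eq_one_iff_adj.mpr hxy.symm] at hyW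
  rcases Nat.le_one_iff_eq_zero_or_eq_one.mp hyW with h | h
  · exact hmed.1.dist_eq_zero_iff.mp h
  · refine absurd ?_ (hmed.dist_ne_of_adj x (dist_eq_one_iff_adj.mp h))
    rw [dist_eq_one_iff_adj.mpr hxy, dist_eq_one_iff_adj.mpr hxy']

end MedianGraph

end

theorem halfspaces_of_theta_class_general {V : Type*} (G : SimpleGraph V)
    (hmed : MedianGraph G) (C : Set (Sym2 V)) (hC : ThetaClass G C) :
    (∃ H H' : Set V, IsHalfspacePair G C H H') ∧
    (∀ e ∈ C, ∀ f ∈ C, e ≠ f → ∀ x : V, x ∈ e → x ∉ f) ∧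
    (∀ H H' : Set V, IsHalfspacePair G C H H' →
      ConvexSet G H ∧ ConvexSet G H' ∧
      ∀ u v : V, s(u, v) ∈ C → u ∈ H → v ∈ H' →
        H = {x | G.dist x u < G.dist x v} ∧
        H' = {x | G.dist x v < G.dist x u}) := by
  obtain ⟨e, he, rfl⟩ := hC
  induction e using Sym2.ind with | _ a b => ?_
  have hab : G.Adj a b := he
  refine ⟨⟨_, _, hmed.isHalfspacePair_closerTo hab⟩, ?_, fun H H' h => ⟨?_, ?_, ?_⟩⟩
  · rintro e he f hf hef x hxe hxf
    obtain ⟨y, rfl⟩ := Sym2.mem_iff_exists.mp hxe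
    obtain ⟨y', rfl⟩ := Sym2.mem_iff_exists.mp hxf
    exact hef (congrArg _ (hmed.eq_of_theta_of_theta hab he hf))
  · rcases hmed.eq_closerTo_of_isHalfspacePair hab h with ⟨rfl, -⟩ | ⟨rfl, -⟩
    exacts [hmed.convexSet_closerTo hab, hmed.convexSet_closerTo hab.symm]
  · rcases hmed.eq_closerTo_of_isHalfspacePair hab h with ⟨-, rfl⟩ | ⟨-, rfl⟩
    exacts [hmed.convexSet_closerTo hab.symm, hmed.convexSet_closerTo hab]
  · exact fun u v huv hu _ =>
      h.eq_of_mem (hmed.isHalfspacePair_closerTo_of_theta hab huv) hu (left_mem_closerTo huv.2.1)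

/-- In a median graph, every Θ-class `C` splits the graph into
exactly two connected components (halfspaces), its edges form a matching, both
halfspaces are convex, and for an edge `uv ∈ C` with `u ∈ H`, `v ∈ H'` the
halfspaces are `W(u,v)` and `W(v,u)`. -/
theorem halfspaces_of_theta_class {V : Type*} [Fintype V] (G : SimpleGraph V)
    (hmed : MedianGraph G) (C : Set (Sym2 V)) (hC : ThetaClass G C) :
    (∃ H H' : Set V, IsHalfspacePair G C H H') ∧
    (∀ e ∈ C, ∀ f ∈ C, e ≠ f → ∀ x : V, x ∈ e → x ∉ f) ∧
    (∀ H H' : Set V, IsHalfspacePair G C H H' →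
      ConvexSet G H ∧ ConvexSet G H' ∧
      ∀ u v : V, s(u, v) ∈ C → u ∈ H → v ∈ H' →
        H = {x | G.dist x u < G.dist x v} ∧
        H' = {x | G.dist x v < G.dist x u}) :=
  halfspaces_of_theta_class_general G hmed C hC
end MedianPaper
end
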